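/- arXiv:1501.03878 — 7 statements merged into one kernel-verified Lean document; each statement's English description precedes it below -/
import Mathlib

section
/- For every real constant c, the function v(θ) := −2 log(√(c²+1) − c cos θ) satisfies v''(θ) + (cos θ/sin θ) v'(θ) + 2(e^{v(θ)} − 1) = 0 for all θ ∈ (0,π), together with v'(0) = v'(π) = 0. -/
/-!
Write `s = √(c² + 1)`, so that `s² − c² = 1` and `s − c cos θ ≥ s − |c| > 0`. Then
`v' = −2c sin θ / (s − c cos θ)`, `v'' = −2c (s cos θ − c) / (s − c cos θ)²` and
`e^v = (s − c cos θ)⁻²`; multiplied by `(s − c cos θ)² / 2`, the left-hand side of the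
equation collapses to `c² + 1 − s² = 0`. The boundary conditions hold because `sin 0 = sin π = 0`.
-/

open Real Set

lemma mul_cos_lt_sqrt_sq_add_one (c θ : ℝ) : c * cos θ < √(c ^ 2 + 1) :=
  calc c * cos θ ≤ |c| * |cos θ| := (le_abs_self _).trans (abs_mul _ _).le
    _ ≤ |c| := mul_le_of_le_one_right (abs_nonneg c) (abs_cos_le_one θ)
    _ = √(c ^ 2) := (sqrt_sq_eq_abs c).symm
    _ < √(c ^ 2 + 1) := sqrt_lt_sqrt (sq_nonneg c) (lt_add_one _)

lemma exp_neg_two_mul_log {x : ℝ} (hx : 0 < x) : exp (-2 * log x) = (x ^ 2)⁻¹ := by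
  rw [← exp_log (inv_pos.2 (pow_pos hx 2)), log_inv, log_pow]
  push_cast
  ring_nf

lemma hasDerivAt_sub_mul_cos (s c θ : ℝ) :
    HasDerivAt (fun θ => s - c * cos θ) (c * sin θ) θ := by
  simpa using ((hasDerivAt_cos θ).const_mul c).const_sub s

section SubMulCos

variable {s c θ : ℝ}

lemma hasDerivAt_neg_two_mul_log_sub_mul_cos (h : s - c * cos θ ≠ 0) :
    HasDerivAt (fun θ => -2 * log (s - c * cos θ)) (-2 * (c * sin θ / (s - c * cos θ))) θ :=
  ((hasDerivAt_sub_mul_cos s c θ).log h).const_mul (-2)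

lemma hasDerivAt_mul_sin_div_sub_mul_cos (h : s - c * cos θ ≠ 0) :
    HasDerivAt (fun θ => c * sin θ / (s - c * cos θ))
      (c * (s * cos θ - c) / (s - c * cos θ) ^ 2) θ := by
  refine (((hasDerivAt_sin θ).const_mul c).div (hasDerivAt_sub_mul_cos s c θ) h).congr_deriv ?_
  field_simp
  linear_combination (-c ^ 2) * sin_sq_add_cos_sq θ

lemma curvature_equation_residual_eq_zero {x y : ℝ} (hs : s ^ 2 = c ^ 2 + 1) (hy : y ≠ 0)
    (h : s - c * x ≠ 0) :
    -2 * (c * (s * x - c) / (s - c * x) ^ 2) + x / y * (-2 * (c * y / (s - c * x)))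
      + 2 * (((s - c * x) ^ 2)⁻¹ - 1) = 0 := by
  field_simp
  linear_combination (-2) * hs

end SubMulCos

theorem stmt_2 (c : ℝ) (v : ℝ → ℝ)
    (hv : v = fun θ : ℝ =>
      -2 * Real.log (Real.sqrt (c ^ 2 + 1) - c * Real.cos θ)) :
    (∀ θ ∈ Ioo (0:ℝ) π,
      deriv (deriv v) θ + (Real.cos θ / Real.sin θ) * deriv v θ
        + 2 * (Real.exp (v θ) - 1) = 0) ∧
    deriv v 0 = 0 ∧ deriv v π = 0 := by
  set s := √(c ^ 2 + 1)
  have hpos (θ : ℝ) : 0 < s - c * cos θ := sub_pos.2 (mul_cos_lt_sqrt_sq_add_one c θ)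
  have hv' : deriv v = fun θ => -2 * (c * sin θ / (s - c * cos θ)) := by
    ext θ
    exact hv ▸ (hasDerivAt_neg_two_mul_log_sub_mul_cos (hpos θ).ne').deriv
  refine ⟨fun θ hθ => ?_, by simp [hv'], by simp [hv']⟩
  have hv'' : deriv (deriv v) θ = -2 * (c * (s * cos θ - c) / (s - c * cos θ) ^ 2) :=
    hv' ▸ ((hasDerivAt_mul_sin_div_sub_mul_cos (hpos θ).ne').const_mul (-2)).deriv
  rw [hv'', hv', hv, exp_neg_two_mul_log (hpos θ)]
  exact curvature_equation_residual_eq_zero (sq_sqrt (by positivity)) (sin_pos_of_pos_of_lt_pi hθ.1 hθ.2).ne'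
    (hpos θ).ne'
end

section
/- Let N ≥ 4 be an integer, ᾱ ∈ ℝ, and κ̄ := log(2(N−3)). Let x̄ ∈ C²(ℝ) be the unique entire solution of x̄'' + (N−3) x̄' + 2(N−3)(e^{x̄} − 1) = 0 with x̄(s) − 2s + κ̄ − ᾱ → 0 and e^{−s}(x̄'(s) − 2) → 0 as s → −∞. Then (x̄(s), x̄'(s)) → (0,0) as s → ∞. -/
/-!
Along a solution, with `y = x'` and `a = N - 3 > 0`, the energy `E = y²/2 + 2a(eˣ - x)` satisfies
`E' = -a y²`, so it decreases to a limit and keeps `y` and `eˣ` bounded for positive times.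
Barbalat's lemma (a function with a finite limit at `+∞` whose derivative is uniformly continuous
has derivative tending to `0`) then applies twice: to `E`, giving `y → 0`, and to `y`, giving
`y' → 0`. The equation then forces `eˣ → 1`, i.e. `x → 0`.
-/

open Real Filter Set Topology Asymptotics

theorem tendsto_zero_of_hasDerivAt_of_uniformContinuousOn {f g : ℝ → ℝ} {L c : ℝ}
    (hf : ∀ t, HasDerivAt f (g t) t) (hL : Tendsto f atTop (𝓝 L))
    (hg : UniformContinuousOn g (Ici c)) : Tendsto g atTop (𝓝 0) := by
  rw [Metric.tendsto_nhds]
  intro ε hε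
  obtain ⟨δ, hδ, hgδ⟩ := Metric.uniformContinuousOn_iff.mp hg (ε / 2) (half_pos hε)
  have hslope : Tendsto (fun t => (f (t + δ / 2) - f t) / (δ / 2)) atTop (𝓝 0) := by
    have hshift : Tendsto (fun t => f (t + δ / 2)) atTop (𝓝 L) :=
      hL.comp (tendsto_atTop_add_const_right _ _ tendsto_id)
    simpa using (hshift.sub hL).div_const (δ / 2)
  filter_upwards [Metric.tendsto_nhds.mp hslope (ε / 2) (half_pos hε), eventually_ge_atTop c]
    with t hslope_t hct
  -- the mean value theorem finds a point `ξ` within `δ` of `t` where `g` is small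
  obtain ⟨ξ, ⟨htξ, hξ⟩, hgξ⟩ := exists_hasDerivAt_eq_slope f g (by linarith : t < t + δ / 2)
    (fun s _ => (hf s).continuousAt.continuousWithinAt) (fun s _ => hf s)
  rw [add_sub_cancel_left] at hgξ
  rw [← hgξ] at hslope_t
  have hclose : dist (g t) (g ξ) < ε / 2 :=
    hgδ t hct ξ (hct.trans htξ.le) (by rw [Real.dist_eq, abs_lt]; constructor <;> linarith)
  calc dist (g t) 0 ≤ dist (g t) (g ξ) + dist (g ξ) 0 := dist_triangle _ _ _
    _ < ε / 2 + ε / 2 := add_lt_add hclose hslope_t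
    _ = ε := add_halves ε

theorem exists_uniformContinuousOn_Ici_of_isBigO_one {g g' : ℝ → ℝ}
    (hg : ∀ t, HasDerivAt g (g' t) t) (hg' : g' =O[atTop] fun _ => (1 : ℝ)) :
    ∃ c, UniformContinuousOn g (Ici c) := by
  obtain ⟨C, hC⟩ := (isBigO_one_iff ℝ).mp hg'
  obtain ⟨c, hc⟩ := eventually_atTop.mp hC
  refine ⟨c, LipschitzOnWith.uniformContinuousOn (K := C.toNNReal) ?_⟩
  refine (convex_Ici c).lipschitzOnWith_of_nnnorm_hasDerivWithin_le
    (fun t _ => (hg t).hasDerivWithinAt) fun t ht => ?_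
  rw [← NNReal.coe_le_coe, coe_nnnorm, Real.coe_toNNReal']
  exact le_max_of_le_left (hc t ht)

namespace DampedExpOscillator

/-- The Lyapunov function of `x'' + a x' + 2a (eˣ - 1) = 0` at the phase point `(x, x')`. -/
noncomputable def energy (a x y : ℝ) : ℝ := y ^ 2 / 2 + 2 * a * (exp x - x)

theorem sq_le_two_mul_energy {a : ℝ} (ha : 0 ≤ a) (x y : ℝ) : y ^ 2 ≤ 2 * energy a x y := by
  have : 0 ≤ exp x - x := by linarith [add_one_le_exp x]
  unfold energy
  nlinarith

theorem mul_exp_le_energy {a : ℝ} (ha : 0 ≤ a) (x y : ℝ) : a * exp x ≤ energy a x y := by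
  have : exp x ≤ 2 * (exp x - x) := by linarith [two_mul_le_exp (x := x)]
  unfold energy
  nlinarith [sq_nonneg y]

section Trajectory

variable {a : ℝ} {x y : ℝ → ℝ}
  (hx : ∀ s, HasDerivAt x (y s) s)
  (hy : ∀ s, HasDerivAt y (-(a * y s) - 2 * a * (exp (x s) - 1)) s)
include hx hy

theorem hasDerivAt_energy (s : ℝ) :
    HasDerivAt (fun s => energy a (x s) (y s)) (-(a * y s ^ 2)) s := by
  have hkin : HasDerivAt (fun s => y s ^ 2 / 2)
      (2 * y s ^ 1 * (-(a * y s) - 2 * a * (exp (x s) - 1)) / 2) s :=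
    ((hy s).pow 2).div_const 2
  have hpot : HasDerivAt (fun s => 2 * a * (exp (x s) - x s))
      (2 * a * (exp (x s) * y s - y s)) s :=
    (((hasDerivAt_exp (x s)).comp s (hx s)).sub (hx s)).const_mul (2 * a)
  exact (hkin.add hpot).congr_deriv (by ring)

theorem antitone_energy (ha : 0 ≤ a) : Antitone fun s => energy a (x s) (y s) :=
  antitone_of_hasDerivAt_nonpos (hasDerivAt_energy hx hy) fun _ =>
    neg_nonpos.mpr (mul_nonneg ha (sq_nonneg _))

theorem tendsto_energy (ha : 0 ≤ a) :
    Tendsto (fun s => energy a (x s) (y s)) atTop (𝓝 (⨅ s, energy a (x s) (y s))) :=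
  tendsto_atTop_ciInf (antitone_energy hx hy ha)
    ⟨0, by
      rintro _ ⟨s, rfl⟩
      exact (mul_nonneg ha (exp_pos _).le).trans (mul_exp_le_energy ha _ _)⟩

theorem isBigO_one_snd (ha : 0 ≤ a) : y =O[atTop] fun _ => (1 : ℝ) := by
  refine IsBigO.of_bound (1 + 2 * energy a (x 0) (y 0)) ?_
  filter_upwards [eventually_ge_atTop 0] with s hs
  have hE := antitone_energy hx hy ha hs
  have := sq_le_two_mul_energy ha (x s) (y s)
  rw [norm_one, mul_one, Real.norm_eq_abs]
  nlinarith [sq_abs (y s), sq_nonneg (|y s| - 1)]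

theorem isBigO_one_exp_fst (ha : 0 < a) : (fun s => exp (x s)) =O[atTop] fun _ => (1 : ℝ) := by
  refine IsBigO.of_bound (energy a (x 0) (y 0) / a) ?_
  filter_upwards [eventually_ge_atTop 0] with s hs
  have hE := antitone_energy hx hy ha.le hs
  have := mul_exp_le_energy ha.le (x s) (y s)
  rw [norm_one, mul_one, Real.norm_of_nonneg (exp_pos _).le, le_div_iff₀ ha]
  linarith

theorem isBigO_one_deriv_snd (ha : 0 < a) :
    (fun s => -(a * y s) - 2 * a * (exp (x s) - 1)) =O[atTop] fun _ => (1 : ℝ) :=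
  ((isBigO_one_snd hx hy ha.le).const_mul_left a).neg_left.sub
    (((isBigO_one_exp_fst hx hy ha).sub (isBigO_const_one ℝ 1 atTop)).const_mul_left (2 * a))

theorem tendsto_snd (ha : 0 < a) : Tendsto y atTop (𝓝 0) := by
  have hderiv (s : ℝ) : HasDerivAt (fun s => -(a * y s ^ 2))
      (-(a * (2 * y s * (-(a * y s) - 2 * a * (exp (x s) - 1))))) s := by
    simpa using (((hy s).pow 2).const_mul a).fun_neg
  have hbound : (fun s => -(a * (2 * y s * (-(a * y s) - 2 * a * (exp (x s) - 1)))))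
      =O[atTop] fun _ => (1 : ℝ) := by
    simpa using ((((isBigO_one_snd hx hy ha.le).const_mul_left 2).mul
      (isBigO_one_deriv_snd hx hy ha)).const_mul_left a).neg_left
  obtain ⟨c, hc⟩ := exists_uniformContinuousOn_Ici_of_isBigO_one hderiv hbound
  have hdissip := tendsto_zero_of_hasDerivAt_of_uniformContinuousOn
    (hasDerivAt_energy hx hy) (tendsto_energy hx hy ha.le) hc
  have hsq : Tendsto (fun s => y s ^ 2) atTop (𝓝 0) := by
    simpa [ha.ne'] using hdissip.div_const (-a)
  rw [tendsto_zero_iff_abs_tendsto_zero]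
  simpa [Function.comp_def, Real.sqrt_sq_eq_abs] using hsq.sqrt

theorem tendsto_deriv_snd (ha : 0 < a) :
    Tendsto (fun s => -(a * y s) - 2 * a * (exp (x s) - 1)) atTop (𝓝 0) := by
  have hderiv (s : ℝ) : HasDerivAt (fun s => -(a * y s) - 2 * a * (exp (x s) - 1))
      (-(a * (-(a * y s) - 2 * a * (exp (x s) - 1))) - 2 * a * (exp (x s) * y s)) s :=
    ((hy s).const_mul a).fun_neg.sub
      ((((hasDerivAt_exp (x s)).comp s (hx s)).sub_const 1).const_mul (2 * a))
  have hbound : (fun s => -(a * (-(a * y s) - 2 * a * (exp (x s) - 1)))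
      - 2 * a * (exp (x s) * y s)) =O[atTop] fun _ => (1 : ℝ) := by
    have hprod : (fun s => exp (x s) * y s) =O[atTop] fun _ => (1 : ℝ) := by
      simpa using (isBigO_one_exp_fst hx hy ha).mul (isBigO_one_snd hx hy ha.le)
    exact ((isBigO_one_deriv_snd hx hy ha).const_mul_left a).neg_left.sub
      (hprod.const_mul_left (2 * a))
  obtain ⟨c, hc⟩ := exists_uniformContinuousOn_Ici_of_isBigO_one hderiv hbound
  exact tendsto_zero_of_hasDerivAt_of_uniformContinuousOn hy (tendsto_snd hx hy ha) hc

theorem tendsto_fst (ha : 0 < a) : Tendsto x atTop (𝓝 0) := by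
  have hforce : Tendsto (fun s => 2 * a * (exp (x s) - 1)) atTop (𝓝 0) := by
    simpa using ((tendsto_deriv_snd hx hy ha).add ((tendsto_snd hx hy ha).const_mul a)).neg
  have hexp : Tendsto (fun s => exp (x s)) atTop (𝓝 1) := by
    simpa [ha.ne'] using (hforce.div_const (2 * a)).add_const 1
  simpa using hexp.log one_ne_zero

end Trajectory

end DampedExpOscillator

theorem stmt_8_general (N : ℕ) (hN : 4 ≤ N)
    (x : ℝ → ℝ) (hx2 : ContDiff ℝ 2 x)
    (hode : ∀ s : ℝ, deriv (deriv x) s + ((N : ℝ) - 3) * deriv x s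
        + 2 * ((N : ℝ) - 3) * (Real.exp (x s) - 1) = 0) :
    Tendsto x atTop (nhds 0) ∧ Tendsto (deriv x) atTop (nhds 0) := by
  have ha : 0 < (N : ℝ) - 3 := by
    have : (4 : ℝ) ≤ N := by exact_mod_cast hN
    linarith
  have hx (s : ℝ) : HasDerivAt x (deriv x s) s :=
    (hx2.differentiable two_ne_zero s).hasDerivAt
  have hy (s : ℝ) : HasDerivAt (deriv x)
      (-(((N : ℝ) - 3) * deriv x s) - 2 * ((N : ℝ) - 3) * (exp (x s) - 1)) s :=
    (hx2.differentiable_deriv_two s).hasDerivAt.congr_deriv (by linarith [hode s])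
  exact ⟨DampedExpOscillator.tendsto_fst hx hy ha, DampedExpOscillator.tendsto_snd hx hy ha⟩

theorem stmt_8 (N : ℕ) (hN : 4 ≤ N) (α κ : ℝ)
    (hκ : κ = Real.log (2 * ((N : ℝ) - 3)))
    (x : ℝ → ℝ) (hx2 : ContDiff ℝ 2 x)
    (hode : ∀ s : ℝ, deriv (deriv x) s + ((N : ℝ) - 3) * deriv x s
        + 2 * ((N : ℝ) - 3) * (Real.exp (x s) - 1) = 0)
    (hlim1 : Tendsto (fun s => x s - 2 * s + κ - α) atBot (nhds 0))
    (hlim2 : Tendsto (fun s => Real.exp (-s) * (deriv x s - 2)) atBot (nhds 0)) :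
    Tendsto x atTop (nhds 0) ∧ Tendsto (deriv x) atTop (nhds 0) :=
  stmt_8_general N hN x hx2 hode
end

section
/- Let N be an integer with 4 ≤ N ≤ 10, ᾱ ∈ ℝ, and κ̄ := log(2(N−3)). Let x̄ ∈ C²(ℝ) be the unique entire solution of x̄'' + (N−3) x̄' + 2(N−3)(e^{x̄} − 1) = 0 with x̄(s) − 2s + κ̄ − ᾱ → 0 and e^{−s}(x̄'(s) − 2) → 0 as s → −∞, and set ȳ := x̄'. Then there exists a strictly increasing sequence s₁ < s₂ < ⋯ → ∞ such that ȳ(s_j) = 0 for every j ≥ 1 and x̄(s₂) < x̄(s₄) < ⋯ < x̄(s_{2j}) < ⋯ < 0 < ⋯ < x̄(s_{2j−1}) < ⋯ < x̄(s₃) < x̄(s₁). -/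
/-!
Put `b = N - 3 ∈ [1, 7]`, so that the equation is the system `x' = y`, `y' = -b y - 2b (eˣ - 1)`.
Its energy `y² / 2 + 2b (eˣ - x - 1)` decreases at rate `b y²`; since `y'` is bounded, this forces
`y → 0`, and then `x → 0`. Near the origin `y x' - x y'` dominates `(x² + y²) / 64` (here `b < 8`
is used), so the angle of `(x, y)` keeps turning and `x`, `y` vanish at arbitrarily late times;
past the next zero of `x`, the next zero of `y` has `x` of the opposite sign. The orbit never
reaches the equilibrium, since it comes from `x = -∞` and solutions are unique, so the energy
strictly drops between zeros of `y` with different `x`. At a zero of `y` the energy is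
`2b (eˣ - x - 1)`, which is monotone on each half-line, and this orders the extrema.
-/

open Real Filter Set Topology

theorem sub_le_mul_sub_of_hasDerivAt_le {f f' : ℝ → ℝ} {a c C : ℝ} (hac : a ≤ c)
    (hf : ∀ t ∈ Icc a c, HasDerivAt f (f' t) t) (hC : ∀ t ∈ Icc a c, f' t ≤ C) :
    f c - f a ≤ C * (c - a) :=
  (convex_Icc a c).image_sub_le_mul_sub_of_deriv_le (HasDerivAt.continuousOn hf)
    (fun t ht => (hf t (interior_subset ht)).differentiableAt.differentiableWithinAt)
    (fun t ht => (hf t (interior_subset ht)).deriv ▸ hC t (interior_subset ht))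
    a (left_mem_Icc.2 hac) c (right_mem_Icc.2 hac) hac

theorem mul_sub_lt_pi_of_cross_le {f g f' g' : ℝ → ℝ} {a c δ : ℝ} (hac : a ≤ c)
    (hf : ∀ t ∈ Icc a c, HasDerivAt f (f' t) t) (hg : ∀ t ∈ Icc a c, HasDerivAt g (g' t) t)
    (hg₀ : ∀ t ∈ Icc a c, g t ≠ 0)
    (hcross : ∀ t ∈ Icc a c, f' t * g t - f t * g' t ≤ -δ * (f t ^ 2 + g t ^ 2)) :
    δ * (c - a) < π := by
  have hangle : ∀ t ∈ Icc a c, HasDerivAt (fun s => arctan (f s / g s))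
      ((f' t * g t - f t * g' t) / (f t ^ 2 + g t ^ 2)) t := by
    intro t ht
    have hquot : HasDerivAt (fun s => f s / g s)
        ((f' t * g t - f t * g' t) / g t ^ 2) t := (hf t ht).div (hg t ht) (hg₀ t ht)
    convert hquot.arctan using 1
    have := hg₀ t ht
    field_simp
    ring
  have hdrop := sub_le_mul_sub_of_hasDerivAt_le hac hangle (C := -δ) fun t ht => by
    have := hg₀ t ht
    rw [div_le_iff₀ (by positivity)]
    exact hcross t ht
  linarith [neg_pi_div_two_lt_arctan (f c / g c), arctan_lt_pi_div_two (f a / g a)]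

theorem frequently_eq_zero_of_cross_le {f g f' g' : ℝ → ℝ} {δ : ℝ} (hδ : 0 < δ)
    (hf : ∀ t, HasDerivAt f (f' t) t) (hg : ∀ t, HasDerivAt g (g' t) t)
    (hcross : ∀ᶠ t in atTop, f' t * g t - f t * g' t ≤ -δ * (f t ^ 2 + g t ^ 2)) :
    ∃ᶠ t in atTop, g t = 0 := by
  obtain ⟨T, hT⟩ := eventually_atTop.1 hcross
  refine frequently_atTop.2 fun a => ?_
  by_contra! hne
  have := mul_sub_lt_pi_of_cross_le (a := max a T) (c := max a T + π / δ)
    (le_add_of_nonneg_right (by positivity))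
    (fun t _ => hf t) (fun t _ => hg t) (fun t ht => hne t ((le_max_left a T).trans ht.1))
    fun t ht => hT t ((le_max_right a T).trans ht.1)
  rw [add_sub_cancel_left, mul_div_cancel₀ _ hδ.ne'] at this
  exact this.false

theorem exists_seq_strictMono_tendsto_of_frequently {P : ℕ → ℝ → Prop}
    (hP : ∀ n, ∃ᶠ t in atTop, P n t) :
    ∃ s : ℕ → ℝ, StrictMono s ∧ Tendsto s atTop atTop ∧ ∀ n, P n (s n) := by
  choose next hle hnext using fun n t => frequently_atTop.1 (hP n) t
  let s : ℕ → ℝ := fun n => Nat.rec (next 0 0) (fun n sn => next (n + 1) (sn + 1)) n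
  have hstep : ∀ n, s n + 1 ≤ s (n + 1) := fun n => hle _ _
  have hlin : ∀ n : ℕ, s 0 + n ≤ s n := by
    intro n
    induction n with
    | zero => simp
    | succ n ih => push_cast; linarith [hstep n]
  refine ⟨s, strictMono_nat_of_lt_succ fun n => by linarith [hstep n], ?_, ?_⟩
  · exact tendsto_atTop_mono hlin
      (tendsto_atTop_add_const_left _ _ tendsto_natCast_atTop_atTop)
  · rintro (_ | n)
    exacts [hnext _ _, hnext _ _]

theorem exists_first_zero {f : ℝ → ℝ} (hf : Continuous f) {a : ℝ} (ha : 0 < f a)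
    (hz : ∃ u ≥ a, f u = 0) : ∃ c > a, f c = 0 ∧ ∀ t ∈ Ico a c, 0 < f t := by
  set S := Ici a ∩ f ⁻¹' {0}
  have hbdd : BddBelow S := ⟨a, fun t ht => ht.1⟩
  have hc : sInf S ∈ S :=
    (isClosed_Ici.inter (isClosed_singleton.preimage hf)).csInf_mem hz hbdd
  have hpos : ∀ t ∈ Ico a (sInf S), 0 < f t := by
    intro t ht
    by_contra! hft
    obtain ⟨u, hu, hfu⟩ := intermediate_value_Icc' ht.1 hf.continuousOn ⟨hft, ha.le⟩
    exact (csInf_le hbdd ⟨hu.1, hfu⟩).not_gt (hu.2.trans_lt ht.2)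
  exact ⟨sInf S, hc.1.lt_of_ne fun hac => ha.ne' (hac ▸ hc.2), hc.2, hpos⟩

theorem eventually_lt_or_eventually_lt_neg {f : ℝ → ℝ} (hf : Continuous f) {m : ℝ}
    (hm : 0 ≤ m) (h : ∀ᶠ t in atTop, m < |f t|) :
    (∀ᶠ t in atTop, m < f t) ∨ (∀ᶠ t in atTop, f t < -m) := by
  obtain ⟨T, hT⟩ := eventually_atTop.1 h
  by_contra! hcon
  obtain ⟨t₁, ht₁, h₁⟩ := frequently_atTop.1 hcon.1 T
  obtain ⟨t₂, ht₂, h₂⟩ := frequently_atTop.1 hcon.2 T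
  have hneg : f t₁ < -m := by
    rcases lt_abs.1 (hT t₁ ht₁) with h | h <;> linarith
  have hpos : m < f t₂ := by
    rcases lt_abs.1 (hT t₂ ht₂) with h | h <;> linarith
  obtain ⟨t, ht, hft⟩ := (isPreconnected_Ici.image f hf.continuousOn).Icc_subset
    ⟨t₁, ht₁, rfl⟩ ⟨t₂, ht₂, rfl⟩ ⟨by linarith, hpos.le⟩
  have := hT t ht
  rw [hft, abs_of_nonneg hm] at this
  exact this.false

theorem not_tendsto_of_hasDerivAt_le_neg {f f' : ℝ → ℝ} {k l : ℝ} (hk : 0 < k)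
    (hf : ∀ t, HasDerivAt f (f' t) t) (hf' : ∀ᶠ t in atTop, f' t ≤ -k) :
    ¬Tendsto f atTop (𝓝 l) := by
  intro hl
  have hnear : ∀ᶠ t in atTop, |f t - l| < k / 2 := by
    have := Metric.tendsto_nhds.1 hl (k / 2) (by positivity)
    simpa only [Real.dist_eq] using this
  obtain ⟨T, hT⟩ := eventually_atTop.1 (hf'.and hnear)
  have hdrop := sub_le_mul_sub_of_hasDerivAt_le (le_add_of_nonneg_right zero_le_one)
    (fun t _ => hf t) (fun t ht => (hT t ht.1).1)
  have h₁ := abs_lt.1 (hT T le_rfl).2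
  have h₂ := abs_lt.1 (hT (T + 1) (by linarith)).2
  linarith

noncomputable def expPotential (u : ℝ) : ℝ := exp u - u - 1

theorem expPotential_zero : expPotential 0 = 0 := by
  simp [expPotential]

theorem expPotential_nonneg (u : ℝ) : 0 ≤ expPotential u := by
  unfold expPotential
  linarith [add_one_le_exp u]

theorem expPotential_pos {u : ℝ} (hu : u ≠ 0) : 0 < expPotential u := by
  unfold expPotential
  linarith [add_one_lt_exp hu]

theorem continuous_expPotential : Continuous expPotential := by
  unfold expPotential
  fun_prop

theorem strictMonoOn_expPotential : StrictMonoOn expPotential (Ici 0) := by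
  intro u hu v _ huv
  have h₁ : 1 ≤ exp u := one_le_exp hu
  have h₂ : v - u + 1 < exp (v - u) := add_one_lt_exp (sub_ne_zero.2 huv.ne')
  have h₃ : exp v = exp u * exp (v - u) := by rw [← exp_add, add_sub_cancel]
  unfold expPotential
  nlinarith

theorem strictAntiOn_expPotential : StrictAntiOn expPotential (Iic 0) := by
  intro u _ v hv huv
  have h₁ : exp v ≤ 1 := exp_le_one_iff.2 hv
  have h₂ : u - v + 1 < exp (u - v) := add_one_lt_exp (sub_ne_zero.2 huv.ne)
  have h₃ : exp u = exp v * exp (u - v) := by rw [← exp_add, add_sub_cancel]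
  unfold expPotential
  nlinarith [exp_pos v, exp_pos (u - v)]

theorem tendsto_zero_of_tendsto_expPotential {α : Type*} {l : Filter α} {f : α → ℝ}
    (h : Tendsto (fun t => expPotential (f t)) l (𝓝 0)) : Tendsto f l (𝓝 0) := by
  rw [Metric.tendsto_nhds]
  intro ε hε
  have hmin : 0 < min (expPotential ε) (expPotential (-ε)) :=
    lt_min (expPotential_pos hε.ne') (expPotential_pos (neg_ne_zero.2 hε.ne'))
  filter_upwards [h.eventually_lt_const hmin] with t ht
  rw [Real.dist_0_eq_abs]
  by_contra! hεf
  rcases le_abs'.1 hεf with hneg | hpos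
  · have := strictAntiOn_expPotential.antitoneOn (hneg.trans (neg_nonpos.2 hε.le))
      (neg_nonpos.2 hε.le) hneg
    linarith [min_le_right (expPotential ε) (expPotential (-ε))]
  · have := strictMonoOn_expPotential.monotoneOn (mem_Ici.2 hε.le) (hε.le.trans hpos) hpos
    linarith [min_le_left (expPotential ε) (expPotential (-ε))]

theorem eventually_lt_abs_of_tendsto_expPotential {α : Type*} {l : Filter α} {f : α → ℝ} {ℓ : ℝ}
    (h : Tendsto (fun t => expPotential (f t)) l (𝓝 ℓ)) (hℓ : 0 < ℓ) :
    ∃ m > 0, ∀ᶠ t in l, m < |f t| := by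
  have hcont : Tendsto expPotential (𝓝 0) (𝓝 0) := by
    simpa only [expPotential_zero] using continuous_expPotential.tendsto 0
  obtain ⟨δ, hδ, hsmall⟩ := Metric.eventually_nhds_iff.1 (hcont.eventually_lt_const (half_pos hℓ))
  refine ⟨δ / 2, half_pos hδ, ?_⟩
  filter_upwards [h.eventually_const_lt (half_lt_self hℓ)] with t ht
  by_contra! hft
  exact (hsmall (by rw [Real.dist_0_eq_abs]; linarith)).not_gt ht

theorem abs_exp_sub_one_le (u : ℝ) : |exp u - 1| ≤ 2 * expPotential u + 1 := by
  have h : 2 * u ≤ exp u := by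
    rcases lt_or_ge (u / 2 + 1) 0 with hu | hu
    · linarith [exp_pos u]
    have hsq : exp u = exp (u / 2) ^ 2 := by rw [← exp_nat_mul]; ring_nf
    have := pow_le_pow_left₀ hu (add_one_le_exp (u / 2)) 2
    nlinarith [sq_nonneg (u / 2 - 1)]
  unfold expPotential
  rw [abs_le]
  constructor <;> linarith [exp_pos u, add_one_le_exp u]

theorem mul_exp_sub_one_pos {σ u : ℝ} (h : 0 < σ * u) : 0 < σ * (exp u - 1) := by
  rcases mul_pos_iff.1 h with ⟨hσ, hu⟩ | ⟨hσ, hu⟩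
  · exact mul_pos hσ (sub_pos.2 (one_lt_exp_iff.2 hu))
  · exact mul_pos_of_neg_of_neg hσ (sub_neg.2 (exp_lt_one_iff.2 hu))

-- The right-hand side is `y x' - x y'` along the flow, with `u = x` and `v = y`.
theorem sq_add_sq_div_le_of_abs_le {b u v : ℝ} (hb₁ : 1 ≤ b) (hb₇ : b ≤ 7) (hu : |u| ≤ 1 / 16) :
    (u ^ 2 + v ^ 2) / 64 ≤ b * u * v + 2 * b * (u * (exp u - 1)) + v ^ 2 := by
  have hexp : |exp u - 1 - u| ≤ u ^ 2 := abs_exp_sub_one_sub_id_le (by linarith)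
  have hcubic : |u * (exp u - 1 - u)| ≤ u ^ 2 / 16 := by
    rw [abs_mul]
    nlinarith [abs_nonneg u, abs_nonneg (exp u - 1 - u)]
  have hlin : 15 / 16 * u ^ 2 ≤ u * (exp u - 1) := by
    linarith [neg_abs_le (u * (exp u - 1 - u))]
  nlinarith [sq_nonneg (63 * v + 32 * b * u),
    mul_le_mul_of_nonneg_left hlin (by linarith : 0 ≤ 2 * b),
    mul_nonneg (mul_nonneg (sub_nonneg.2 hb₁) (sub_nonneg.2 hb₇)) (sq_nonneg u)]

noncomputable def energy (b : ℝ) (x y : ℝ → ℝ) (t : ℝ) : ℝ :=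
  y t ^ 2 / 2 + 2 * b * expPotential (x t)

theorem energy_nonneg {b : ℝ} (hb : 0 ≤ b) (x y : ℝ → ℝ) (t : ℝ) : 0 ≤ energy b x y t := by
  unfold energy
  have := expPotential_nonneg (x t)
  positivity

theorem abs_force_le_energy {b : ℝ} (hb : 1 ≤ b) (x y : ℝ → ℝ) (t : ℝ) :
    |-(b * y t) - 2 * b * (exp (x t) - 1)| ≤ b * (3 + 2 * energy b x y t) := by
  have hy : |y t| ≤ 1 + y t ^ 2 / 2 := by nlinarith [sq_abs (y t), sq_nonneg (|y t| - 1)]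
  have hx := abs_exp_sub_one_le (x t)
  have hG := expPotential_nonneg (x t)
  calc |-(b * y t) - 2 * b * (exp (x t) - 1)|
      = |b * y t + 2 * b * (exp (x t) - 1)| := by rw [← abs_neg]; congr 1; ring
    _ ≤ b * |y t| + 2 * b * |exp (x t) - 1| := by
        refine (abs_add_le _ _).trans_eq ?_
        rw [abs_mul, abs_mul, abs_of_nonneg (by linarith : (0 : ℝ) ≤ b),
          abs_of_nonneg (by linarith : (0 : ℝ) ≤ 2 * b)]
    _ ≤ b * (3 + 2 * energy b x y t) := by
        unfold energy
        have hb₀ : 0 ≤ b := by linarith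
        nlinarith [mul_le_mul_of_nonneg_left hy hb₀, mul_le_mul_of_nonneg_left hx hb₀,
          mul_nonneg (mul_nonneg (sub_nonneg.2 hb) hb₀) hG, mul_nonneg hb₀ (sq_nonneg (y t))]

structure DampedSolution (b : ℝ) (x y : ℝ → ℝ) : Prop where
  hasDerivAt_x : ∀ t, HasDerivAt x (y t) t
  hasDerivAt_y : ∀ t, HasDerivAt y (-(b * y t) - 2 * b * (exp (x t) - 1)) t

namespace DampedSolution

variable {b : ℝ} {x y : ℝ → ℝ}

theorem continuous_x (h : DampedSolution b x y) : Continuous x :=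
  continuous_iff_continuousAt.2 fun t => (h.hasDerivAt_x t).continuousAt

theorem continuous_y (h : DampedSolution b x y) : Continuous y :=
  continuous_iff_continuousAt.2 fun t => (h.hasDerivAt_y t).continuousAt

theorem hasDerivAt_energy (h : DampedSolution b x y) (t : ℝ) :
    HasDerivAt (energy b x y) (-(b * y t ^ 2)) t := by
  have hpot : HasDerivAt (fun s => expPotential (x s)) ((exp (x t) - 1) * y t) t :=
    ((((h.hasDerivAt_x t).exp).sub (h.hasDerivAt_x t)).sub_const 1).congr_deriv (by ring)
  exact ((((h.hasDerivAt_y t).pow 2).div_const 2).add (hpot.const_mul (2 * b))).congr_deriv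
    (by ring)

theorem energy_antitone (h : DampedSolution b x y) (hb : 0 ≤ b) : Antitone (energy b x y) :=
  antitone_of_hasDerivAt_nonpos (f' := fun t => -(b * y t ^ 2)) h.hasDerivAt_energy fun _ =>
    neg_nonpos.2 (mul_nonneg hb (sq_nonneg _))

theorem exists_tendsto_energy (h : DampedSolution b x y) (hb : 0 ≤ b) :
    ∃ L, Tendsto (energy b x y) atTop (𝓝 L) :=
  ⟨_, tendsto_atTop_ciInf (h.energy_antitone hb)
    ⟨0, by rintro _ ⟨t, rfl⟩; exact energy_nonneg hb x y t⟩⟩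

theorem tendsto_y (h : DampedSolution b x y) (hb : 1 ≤ b) : Tendsto y atTop (𝓝 0) := by
  set V := energy b x y
  have hb₀ : 0 ≤ b := by linarith
  obtain ⟨L, hL⟩ := h.exists_tendsto_energy hb₀
  set M := b * (3 + 2 * V 0)
  have hM : 0 < M := by have := energy_nonneg hb₀ x y 0; positivity
  have hlip : ∀ t ≥ 0, ∀ u ≥ 0, |y u - y t| ≤ M * |u - t| := fun t ht u hu =>
    (convex_Ici 0).norm_image_sub_le_of_norm_hasDerivWithin_le
      (fun s _ => (h.hasDerivAt_y s).hasDerivWithinAt)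
      (fun s hs => (abs_force_le_energy hb x y s).trans
        (mul_le_mul_of_nonneg_left (by linarith [h.energy_antitone hb₀ (mem_Ici.1 hs)]) hb₀))
      ht hu
  rw [Metric.tendsto_nhds]
  intro ε hε
  set δ := ε / (2 * M)
  have hdrop : Tendsto (fun t => V t - V (t + δ)) atTop (𝓝 0) := by
    simpa using hL.sub (hL.comp (tendsto_atTop_add_const_right _ δ tendsto_id))
  filter_upwards [hdrop.eventually_lt_const (show 0 < b * (ε / 2) ^ 2 * δ by positivity),
    eventually_ge_atTop 0] with t hdt ht
  rw [Real.dist_0_eq_abs]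
  by_contra! hyt
  -- `y` stays at least `ε / 2` in size for a time `δ`, which costs a fixed amount of energy
  have hlow : ∀ u ∈ Icc t (t + δ), (ε / 2) ^ 2 ≤ y u ^ 2 := by
    intro u hu
    have hclose := hlip t ht u (ht.trans hu.1)
    rw [abs_of_nonneg (sub_nonneg.2 hu.1)] at hclose
    have hMδ : M * (u - t) ≤ ε / 2 := by
      calc M * (u - t) ≤ M * δ := by gcongr; linarith [hu.2]
        _ = ε / 2 := by simp only [δ]; field_simp
    have := abs_sub_abs_le_abs_sub (y t) (y u)
    rw [abs_sub_comm] at this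
    nlinarith [sq_abs (y u), abs_nonneg (y u)]
  have := sub_le_mul_sub_of_hasDerivAt_le (le_add_of_nonneg_right (by positivity : 0 ≤ δ))
    (fun u _ => h.hasDerivAt_energy u) (C := -(b * (ε / 2) ^ 2))
    (fun u hu => by nlinarith [hlow u hu])
  linarith

theorem tendsto_expPotential_x (h : DampedSolution b x y) (hb : 1 ≤ b) :
    Tendsto (fun t => expPotential (x t)) atTop (𝓝 0) := by
  have hb₀ : 0 < b := by linarith
  have hy := h.tendsto_y hb
  obtain ⟨L, hL⟩ := h.exists_tendsto_energy hb₀.le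
  have hpot : Tendsto (fun t => expPotential (x t)) atTop (𝓝 (L / (2 * b))) := by
    have := (hL.sub ((hy.pow 2).div_const 2)).div_const (2 * b)
    rw [zero_pow two_ne_zero, zero_div, sub_zero] at this
    refine this.congr fun t => ?_
    simp only [energy]
    field_simp
    ring
  rcases (ge_of_tendsto' hpot fun t => expPotential_nonneg (x t)).eq_or_lt with hℓ | hℓ
  · rwa [← hℓ] at hpot
  obtain ⟨m, hm, hfar⟩ := eventually_lt_abs_of_tendsto_expPotential hpot hℓ
  exfalso
  -- once `x` keeps a sign, `eˣ - 1` pushes `y` away from `0` at a steady rate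
  rcases eventually_lt_or_eventually_lt_neg h.continuous_x hm.le hfar with hpos | hneg
  · set c := exp m - 1
    have hc : 0 < c := sub_pos.2 (one_lt_exp_iff.2 hm)
    refine not_tendsto_of_hasDerivAt_le_neg (mul_pos hb₀ hc) h.hasDerivAt_y ?_ hy
    filter_upwards [hpos, Metric.tendsto_nhds.1 hy c hc] with t hxt hyt
    rw [Real.dist_0_eq_abs] at hyt
    have : exp m < exp (x t) := exp_lt_exp.2 hxt
    nlinarith [neg_abs_le (y t)]
  · set c := 1 - exp (-m)
    have hc : 0 < c := sub_pos.2 (exp_lt_one_iff.2 (by linarith))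
    refine not_tendsto_of_hasDerivAt_le_neg (f := fun t => -y t) (mul_pos hb₀ hc)
      (fun t => (h.hasDerivAt_y t).neg) ?_ (by simpa only [neg_zero] using hy.neg)
    filter_upwards [hneg, Metric.tendsto_nhds.1 hy c hc] with t hxt hyt
    rw [Real.dist_0_eq_abs] at hyt
    have : exp (x t) < exp (-m) := exp_lt_exp.2 hxt
    nlinarith [le_abs_self (y t)]

theorem tendsto_x (h : DampedSolution b x y) (hb : 1 ≤ b) : Tendsto x atTop (𝓝 0) :=
  tendsto_zero_of_tendsto_expPotential (h.tendsto_expPotential_x hb)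

theorem frequently_x_eq_zero (h : DampedSolution b x y) (hb₁ : 1 ≤ b) (hb₇ : b ≤ 7)
    (hsmall : ∀ᶠ t in atTop, |x t| ≤ 1 / 16) : ∃ᶠ t in atTop, x t = 0 :=
  frequently_eq_zero_of_cross_le (by norm_num : (0 : ℝ) < 1 / 64) h.hasDerivAt_y h.hasDerivAt_x <|
    hsmall.mono fun t ht => by nlinarith [sq_add_sq_div_le_of_abs_le (v := y t) hb₁ hb₇ ht]

theorem frequently_y_eq_zero (h : DampedSolution b x y) (hb₁ : 1 ≤ b) (hb₇ : b ≤ 7)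
    (hsmall : ∀ᶠ t in atTop, |x t| ≤ 1 / 16) : ∃ᶠ t in atTop, y t = 0 :=
  frequently_eq_zero_of_cross_le (f := fun t => -x t) (by norm_num : (0 : ℝ) < 1 / 64)
    (fun t => (h.hasDerivAt_x t).neg) h.hasDerivAt_y <|
    hsmall.mono fun t ht => by nlinarith [sq_add_sq_div_le_of_abs_le (v := y t) hb₁ hb₇ ht]

theorem x_eq_zero_of_le (h : DampedSolution b x y) {a t₀ : ℝ} (hx₀ : x t₀ = 0) (hy₀ : y t₀ = 0)
    (ha : a ≤ t₀) : x a = 0 := by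
  let v : ℝ → ℝ × ℝ → ℝ × ℝ := fun _ p => (p.2, -(b * p.2) - 2 * b * (exp p.1 - 1))
  let γ : ℝ → ℝ × ℝ := fun t => (x t, y t)
  have hγ : ∀ t, HasDerivAt γ (v t (γ t)) t := fun t =>
    (h.hasDerivAt_x t).prodMk (h.hasDerivAt_y t)
  obtain ⟨R, hR⟩ := (isCompact_Icc.image_of_continuousOn
    (HasDerivAt.continuousOn fun t _ => hγ t)).isBounded.subset_closedBall (0 : ℝ × ℝ)
  have hv : ContDiff ℝ 1 (v 0) := by fun_prop
  obtain ⟨K, hK⟩ := hv.locallyLipschitz.locallyLipschitzOn.exists_lipschitzOnWith_of_compact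
    (isCompact_closedBall (0 : ℝ × ℝ) R)
  have hγR : ∀ t ∈ Icc a t₀, γ t ∈ Metric.closedBall 0 R := fun t ht => hR ⟨t, ht, rfl⟩
  have heq := ODE_solution_unique_of_mem_Icc_left (v := v) (g := fun _ => 0)
    (fun _ _ => hK) (HasDerivAt.continuousOn fun t _ => hγ t)
    (fun t _ => (hγ t).hasDerivWithinAt) (fun t ht => hγR t (Ioc_subset_Icc_self ht))
    continuousOn_const
    (fun t _ => by convert hasDerivWithinAt_const t (Iic t) (0 : ℝ × ℝ) using 1; simp [v])
    (fun _ _ => by simpa [γ, hx₀, hy₀] using hγR t₀ (right_mem_Icc.2 ha))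
    (by simp [γ, hx₀, hy₀]) (left_mem_Icc.2 ha)
  exact congrArg Prod.fst heq

theorem energy_lt_of_x_ne (h : DampedSolution b x y) (hb : 0 < b) {a c : ℝ} (hac : a ≤ c)
    (hx : x a ≠ x c) : energy b x y c < energy b x y a := by
  have hV := h.energy_antitone hb.le
  refine (hV hac).lt_of_ne fun hVeq => hx ?_
  have hconst : ∀ t ∈ Icc a c, energy b x y t = energy b x y a := fun t ht =>
    le_antisymm (hV ht.1) (hVeq ▸ hV ht.2)
  -- constant energy means `y² = 0`, so `x` cannot move
  have hy : ∀ t ∈ Ioo a c, y t = 0 := by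
    intro t ht
    have hmin : IsLocalMin (energy b x y) t :=
      Filter.mem_of_superset (Ioo_mem_nhds ht.1 ht.2) fun u hu =>
        ((hconst t (Ioo_subset_Icc_self ht)).trans (hconst u (Ioo_subset_Icc_self hu)).symm).le
    have := hmin.hasDerivAt_eq_zero (h.hasDerivAt_energy t)
    simpa [hb.ne'] using this
  rcases hac.lt_or_eq with hlt | rfl
  · obtain ⟨ξ, hξ, hslope⟩ := exists_hasDerivAt_eq_slope x y hlt h.continuous_x.continuousOn
      fun t _ => h.hasDerivAt_x t
    rw [hy ξ hξ, eq_comm, div_eq_zero_iff, sub_eq_zero] at hslope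
    exact (hslope.resolve_right (sub_ne_zero.2 hlt.ne')).symm
  · rfl

theorem exists_y_eq_zero_mul_x_neg (h : DampedSolution b x y) (hb : 0 < b)
    (hzx : ∃ᶠ t in atTop, x t = 0) (hzy : ∃ᶠ t in atTop, y t = 0) {σ t₀ : ℝ}
    (hy₀ : y t₀ = 0) (hx₀ : 0 < σ * x t₀) : ∃ t₂ > t₀, y t₂ = 0 ∧ σ * x t₂ < 0 := by
  obtain ⟨t₁, ht₁, hx₁, hxpos⟩ := exists_first_zero (h.continuous_x.const_mul σ) hx₀ <| by
    obtain ⟨t, ht, hxt⟩ := frequently_atTop.1 hzx t₀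
    exact ⟨t, ht, by simp [hxt]⟩
  -- while `σ x > 0`, the quantity `σ e^{bt} y` decreases
  have hy₁ : 0 < -σ * y t₁ := by
    have hderiv : ∀ t, HasDerivAt (fun s => σ * (exp (b * s) * y s))
        (-(2 * b * exp (b * t) * (σ * (exp (x t) - 1)))) t := fun t =>
      ((((hasDerivAt_id t).const_mul b).exp.mul (h.hasDerivAt_y t)).const_mul σ).congr_deriv
        (by simp only [id]; ring)
    have hanti := strictAntiOn_of_hasDerivWithinAt_neg (convex_Icc t₀ t₁)
      (HasDerivAt.continuousOn fun t _ => hderiv t) (fun t _ => (hderiv t).hasDerivWithinAt)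
      fun t ht => by
        rw [interior_Icc] at ht
        have := mul_exp_sub_one_pos (hxpos t (Ioo_subset_Ico_self ht))
        have := exp_pos (b * t)
        have : 0 < 2 * b * exp (b * t) * (σ * (exp (x t) - 1)) := by positivity
        linarith
    have := hanti (left_mem_Icc.2 ht₁.le) (right_mem_Icc.2 ht₁.le) ht₁
    simp only [hy₀, mul_zero] at this
    nlinarith [exp_pos (b * t₁)]
  obtain ⟨t₂, ht₂, hy₂, hypos⟩ := exists_first_zero (h.continuous_y.const_mul (-σ)) hy₁ <| by
    obtain ⟨t, ht, hyt⟩ := frequently_atTop.1 hzy t₁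
    exact ⟨t, ht, by simp [hyt]⟩
  have hanti := strictAntiOn_of_hasDerivWithinAt_neg (convex_Icc t₁ t₂)
    (HasDerivAt.continuousOn fun t _ => (h.hasDerivAt_x t).const_mul σ)
    (fun t _ => ((h.hasDerivAt_x t).const_mul σ).hasDerivWithinAt) fun t ht => by
      rw [interior_Icc] at ht
      linarith [hypos t (Ioo_subset_Ico_self ht)]
  have hσ : -σ ≠ 0 := neg_ne_zero.2 (left_ne_zero_of_mul hx₀.ne')
  refine ⟨t₂, ht₁.trans ht₂, (mul_eq_zero.1 hy₂).resolve_left hσ, ?_⟩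
  simpa [hx₁] using hanti (left_mem_Icc.2 ht₂.le) (right_mem_Icc.2 ht₂.le) ht₂

theorem frequently_y_eq_zero_mul_x_pos (h : DampedSolution b x y) (hb : 0 < b)
    (hzx : ∃ᶠ t in atTop, x t = 0) (hzy : ∃ᶠ t in atTop, y t = 0)
    (horigin : ∀ t, y t = 0 → x t ≠ 0) {σ : ℝ} (hσ : σ ≠ 0) :
    ∃ᶠ t in atTop, y t = 0 ∧ 0 < σ * x t := by
  refine frequently_atTop.2 fun a => ?_
  obtain ⟨t₁, ht₁, hy₁⟩ := frequently_atTop.1 hzy a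
  rcases (mul_ne_zero hσ (horigin t₁ hy₁)).lt_or_gt with hneg | hpos
  · obtain ⟨t₂, ht₂, hy₂, hx₂⟩ := h.exists_y_eq_zero_mul_x_neg hb hzx hzy (σ := -σ) hy₁
      (by linarith [neg_mul σ (x t₁)])
    exact ⟨t₂, by linarith, hy₂, by linarith [neg_mul σ (x t₂)]⟩
  · exact ⟨t₁, ht₁, hy₁, hpos⟩

theorem exists_oscillating_zeros (h : DampedSolution b x y) (hb₁ : 1 ≤ b) (hb₇ : b ≤ 7)
    (hbot : Tendsto x atBot atBot) :
    ∃ s : ℕ → ℝ, StrictMono s ∧ Tendsto s atTop atTop ∧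
      (∀ j : ℕ, y (s j) = 0) ∧
      (∀ j : ℕ, x (s (2 * j + 1)) < x (s (2 * j + 3))) ∧
      (∀ j : ℕ, x (s (2 * j + 1)) < 0) ∧
      (∀ j : ℕ, 0 < x (s (2 * j))) ∧
      (∀ j : ℕ, x (s (2 * j + 2)) < x (s (2 * j))) := by
  have hb : 0 < b := by linarith
  have hsmall : ∀ᶠ t in atTop, |x t| ≤ 1 / 16 := by
    have hx := (h.tendsto_x hb₁).abs
    rw [abs_zero] at hx
    exact (hx.eventually_lt_const (by norm_num)).mono fun _ => le_of_lt
  have horigin : ∀ t, y t = 0 → x t ≠ 0 := fun t hy hx => by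
    obtain ⟨a, hxa, hat⟩ := ((hbot.eventually (eventually_lt_atBot 0)).and
      (eventually_le_atBot t)).exists
    exact hxa.ne (h.x_eq_zero_of_le hx hy hat)
  obtain ⟨s, hmono, htend, hs⟩ := exists_seq_strictMono_tendsto_of_frequently fun n =>
    h.frequently_y_eq_zero_mul_x_pos hb (h.frequently_x_eq_zero hb₁ hb₇ hsmall)
      (h.frequently_y_eq_zero hb₁ hb₇ hsmall) horigin (pow_ne_zero n (by norm_num : (-1 : ℝ) ≠ 0))
  have hpos : ∀ j, 0 < x (s (2 * j)) := fun j => by simpa [pow_mul] using (hs (2 * j)).2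
  have hneg : ∀ j, x (s (2 * j + 1)) < 0 := fun j => by
    simpa [pow_succ, pow_mul] using (hs (2 * j + 1)).2
  have hpot : ∀ n, expPotential (x (s (n + 2))) < expPotential (x (s n)) := fun n => by
    have hne : x (s n) ≠ x (s (n + 1)) := fun heq => by
      have h₁ := (hs n).2
      have h₂ := (hs (n + 1)).2
      rw [pow_succ, ← heq] at h₂
      linarith
    have hlt := h.energy_lt_of_x_ne hb (hmono (Nat.lt_succ_self n)).le hne
    have hle := h.energy_antitone hb.le (hmono (Nat.lt_succ_self (n + 1))).le
    simp only [energy, (hs _).1] at hlt hle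
    nlinarith
  refine ⟨s, hmono, htend, fun n => (hs n).1, fun j => ?_, hneg, hpos, fun j => ?_⟩
  · exact (strictAntiOn_expPotential.lt_iff_gt (hneg (j + 1)).le (hneg j).le).1 (hpot _)
  · exact (strictMonoOn_expPotential.lt_iff_lt (hpos (j + 1)).le (hpos j).le).1 (hpot _)

end DampedSolution

theorem stmt_9_general (N : ℕ) (hN : 4 ≤ N) (hN' : N ≤ 10) (α κ : ℝ)
    (x : ℝ → ℝ) (hx2 : ContDiff ℝ 2 x)
    (hode : ∀ s : ℝ, deriv (deriv x) s + ((N : ℝ) - 3) * deriv x s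
        + 2 * ((N : ℝ) - 3) * (Real.exp (x s) - 1) = 0)
    (hlim1 : Tendsto (fun s => x s - 2 * s + κ - α) atBot (nhds 0))
    (y : ℝ → ℝ) (hy : y = deriv x) :
    -- s j is the (j+1)-st zero of y, i.e. s 0 = s₁, s 1 = s₂, ⋯
    ∃ s : ℕ → ℝ, StrictMono s ∧ Tendsto s atTop atTop ∧
      (∀ j : ℕ, y (s j) = 0) ∧
      (∀ j : ℕ, x (s (2 * j + 1)) < x (s (2 * j + 3))) ∧
      (∀ j : ℕ, x (s (2 * j + 1)) < 0) ∧
      (∀ j : ℕ, 0 < x (s (2 * j))) ∧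
      (∀ j : ℕ, x (s (2 * j + 2)) < x (s (2 * j))) := by
  subst hy
  have hN₄ : (4 : ℝ) ≤ N := by exact_mod_cast hN
  have hN₁₀ : (N : ℝ) ≤ 10 := by exact_mod_cast hN'
  have hsol : DampedSolution ((N : ℝ) - 3) x (deriv x) :=
    ⟨fun t => (hx2.differentiable two_ne_zero t).hasDerivAt, fun t =>
      (hx2.differentiable_deriv_two t).hasDerivAt.congr_deriv (by linarith [hode t])⟩
  have hbot : Tendsto x atBot atBot := by
    have hlin : Tendsto (fun s : ℝ => 2 * s + (α - κ)) atBot atBot :=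
      tendsto_atBot_add_const_right _ _ (tendsto_id.const_mul_atBot two_pos)
    exact (hlim1.add_atBot hlin).congr fun s => by ring
  exact hsol.exists_oscillating_zeros (by linarith) (by linarith) hbot

theorem stmt_9 (N : ℕ) (hN : 4 ≤ N) (hN' : N ≤ 10) (α κ : ℝ)
    (hκ : κ = Real.log (2 * ((N : ℝ) - 3)))
    (x : ℝ → ℝ) (hx2 : ContDiff ℝ 2 x)
    (hode : ∀ s : ℝ, deriv (deriv x) s + ((N : ℝ) - 3) * deriv x s
        + 2 * ((N : ℝ) - 3) * (Real.exp (x s) - 1) = 0)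
    (hlim1 : Tendsto (fun s => x s - 2 * s + κ - α) atBot (nhds 0))
    (hlim2 : Tendsto (fun s => Real.exp (-s) * (deriv x s - 2)) atBot (nhds 0))
    (y : ℝ → ℝ) (hy : y = deriv x) :
    -- s j is the (j+1)-st zero of y, i.e. s 0 = s₁, s 1 = s₂, ⋯
    ∃ s : ℕ → ℝ, StrictMono s ∧ Tendsto s atTop atTop ∧
      (∀ j : ℕ, y (s j) = 0) ∧
      (∀ j : ℕ, x (s (2 * j + 1)) < x (s (2 * j + 3))) ∧
      (∀ j : ℕ, x (s (2 * j + 1)) < 0) ∧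
      (∀ j : ℕ, 0 < x (s (2 * j))) ∧
      (∀ j : ℕ, x (s (2 * j + 2)) < x (s (2 * j))) :=
  stmt_9_general N hN hN' α κ x hx2 hode hlim1 y hy
end

section
/- Let N ≥ 4 be an integer, α ∈ ℝ, and κ := log((N−3)/(N−2)). For θ ∈ (0,π/2] set t(θ) := log tan(θ/2) ∈ (−∞,0], and given v ∈ C²((0,π/2]) define x ∈ C²((−∞,0]) by x(t) := v(θ) − (−2 log sin θ + κ), where t = t(θ). Then v satisfies v'' + (N−2)(cos θ/sin θ) v' + 2(N−2)(e^v − 1) = 0 on (0,π/2) with v(θ) → α and v'(θ) → 0 as θ ↓ 0, if and only if x satisfies x''(t) − (N−3) tanh(t) x'(t) + 2(N−3)(e^{x(t)} − 1) = 0 on (−∞,0), x(t) + 2 log cosh(t) + κ − α → 0 as t → −∞, and cosh(t) x'(t) + 2 sinh(t) → 0 as t → −∞. -/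
/-!
Under θ = 2 arctan (exp t), the inverse of t = log tan (θ / 2), one has dθ/dt = sin θ = 1 / cosh t
and cos θ = -tanh t. Substituting v(θ) = x(t) + 2 log cosh t + κ, the chain rule turns the radial
operator applied to x into the angular operator applied to v, divided by cosh² t; the constant κ,
with exp κ = (N - 3) / (N - 2), is what matches the two exponential nonlinearities. The substitution
maps `atBot` onto `𝓝[>] 0`, so it also transports the boundary behaviour, with
v'(θ) = cosh t · x'(t) + 2 sinh t.
-/

open Real Set Filter Topology

lemma sin_two_arctan (u : ℝ) : sin (2 * arctan u) = 2 * u / (1 + u ^ 2) := by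
  have h : √(1 + u ^ 2) ^ 2 = 1 + u ^ 2 := sq_sqrt (by positivity)
  have h0 : √(1 + u ^ 2) ≠ 0 := by positivity
  rw [sin_two_mul, sin_arctan, cos_arctan]
  field_simp
  rw [h]

lemma cos_two_arctan (u : ℝ) : cos (2 * arctan u) = (1 - u ^ 2) / (1 + u ^ 2) := by
  have h : √(1 + u ^ 2) ^ 2 = 1 + u ^ 2 := sq_sqrt (by positivity)
  have h0 : √(1 + u ^ 2) ≠ 0 := by positivity
  rw [cos_two_mul, cos_arctan]
  field_simp
  linear_combination -2 * h

lemma sin_two_arctan_exp (t : ℝ) : sin (2 * arctan (exp t)) = (cosh t)⁻¹ := by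
  rw [sin_two_arctan, cosh_eq, exp_neg]
  field_simp
  ring

lemma cos_two_arctan_exp (t : ℝ) : cos (2 * arctan (exp t)) = -tanh t := by
  rw [cos_two_arctan, tanh_eq_sinh_div_cosh, sinh_eq, cosh_eq, exp_neg]
  field_simp
  ring

lemma cos_div_sin_two_arctan_exp (t : ℝ) :
    cos (2 * arctan (exp t)) / sin (2 * arctan (exp t)) = -sinh t := by
  rw [cos_two_arctan_exp, sin_two_arctan_exp, tanh_eq_sinh_div_cosh]
  field_simp [(cosh_pos t).ne']

lemma hasDerivAt_two_arctan_exp (t : ℝ) :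
    HasDerivAt (fun s ↦ 2 * arctan (exp s)) (cosh t)⁻¹ t := by
  refine (((hasDerivAt_arctan (exp t)).comp t (hasDerivAt_exp t)).const_mul 2).congr_deriv ?_
  rw [cosh_eq, exp_neg]
  field_simp
  ring

lemma hasDerivAt_comp_two_arctan_exp {g : ℝ → ℝ} {t : ℝ}
    (hg : DifferentiableAt ℝ g (2 * arctan (exp t))) :
    HasDerivAt (fun s ↦ g (2 * arctan (exp s))) (deriv g (2 * arctan (exp t)) / cosh t) t := by
  rw [div_eq_mul_inv]
  exact hg.hasDerivAt.comp t (hasDerivAt_two_arctan_exp t)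

lemma two_arctan_exp_mem_Ioo {t : ℝ} (ht : t < 0) : 2 * arctan (exp t) ∈ Ioo 0 (π / 2) := by
  have hlt : arctan (exp t) < π / 4 := by
    rw [← arctan_one]
    exact arctan_strictMono (exp_lt_one_iff.2 ht)
  exact ⟨by linarith [arctan_pos.2 (exp_pos t)], by linarith⟩

lemma log_tan_half_neg {θ : ℝ} (hθ : θ ∈ Ioo 0 (π / 2)) : log (tan (θ / 2)) < 0 := by
  have hpos : 0 < tan (θ / 2) :=
    tan_pos_of_pos_of_lt_pi_div_two (by linarith [hθ.1]) (by linarith [hθ.2, pi_pos])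
  have hlt : tan (θ / 2) < 1 := by
    rw [← tan_pi_div_four]
    exact tan_lt_tan_of_lt_of_lt_pi_div_two (by linarith [hθ.1, pi_pos]) (by linarith [pi_pos])
      (by linarith [hθ.2])
  exact log_neg hpos hlt

lemma two_arctan_exp_log_tan_half {θ : ℝ} (hθ : θ ∈ Ioo 0 π) :
    2 * arctan (exp (log (tan (θ / 2)))) = θ := by
  rw [exp_log (tan_pos_of_pos_of_lt_pi_div_two (by linarith [hθ.1]) (by linarith [hθ.2])),
    arctan_tan (by linarith [hθ.1, pi_pos]) (by linarith [hθ.2])]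
  ring

lemma forall_mem_Ioo_iff_forall_neg {P : ℝ → Prop} :
    (∀ θ ∈ Ioo 0 (π / 2), P θ) ↔ ∀ t < 0, P (2 * arctan (exp t)) := by
  refine ⟨fun h t ht ↦ h _ (two_arctan_exp_mem_Ioo ht), fun h θ hθ ↦ ?_⟩
  rw [← two_arctan_exp_log_tan_half ⟨hθ.1, by linarith [hθ.2, pi_pos]⟩]
  exact h _ (log_tan_half_neg hθ)

lemma tendsto_log_tan_half_nhdsGT_zero :
    Tendsto (fun θ ↦ log (tan (θ / 2))) (𝓝[>] 0) atBot := by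
  refine tendsto_log_nhdsGT_zero.comp (tendsto_nhdsWithin_iff.2 ⟨?_, ?_⟩)
  · have h : ContinuousAt (fun θ : ℝ ↦ tan (θ / 2)) 0 :=
      (continuousAt_tan.2 (by simp)).comp (continuousAt_id.div_const 2)
    simpa using h.tendsto.mono_left nhdsWithin_le_nhds
  · filter_upwards [Ioo_mem_nhdsGT pi_pos] with θ hθ
    exact tan_pos_of_pos_of_lt_pi_div_two (by linarith [hθ.1]) (by linarith [hθ.2])

lemma map_two_arctan_exp_atBot : map (fun t ↦ 2 * arctan (exp t)) atBot = 𝓝[>] 0 := by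
  refine le_antisymm ?_ ?_
  · refine tendsto_nhdsWithin_iff.2 ⟨?_, .of_forall fun t ↦ ?_⟩
    · simpa using ((continuous_arctan.tendsto 0).comp tendsto_exp_atBot).const_mul 2
    · exact mul_pos two_pos (arctan_pos.2 (exp_pos t))
  · calc 𝓝[>] 0 = map (fun θ ↦ 2 * arctan (exp (log (tan (θ / 2))))) (𝓝[>] 0) := by
          refine (map_congr ?_).trans map_id |>.symm
          filter_upwards [Ioo_mem_nhdsGT pi_pos] with θ hθ
          exact two_arctan_exp_log_tan_half hθ
      _ = map (fun t ↦ 2 * arctan (exp t)) (map (fun θ ↦ log (tan (θ / 2))) (𝓝[>] 0)) :=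
          map_map.symm
      _ ≤ map (fun t ↦ 2 * arctan (exp t)) atBot := map_mono tendsto_log_tan_half_nhdsGT_zero

noncomputable section

def angularOp (n : ℝ) (v : ℝ → ℝ) (θ : ℝ) : ℝ :=
  deriv (deriv v) θ + (n - 2) * (cos θ / sin θ) * deriv v θ + 2 * (n - 2) * (exp (v θ) - 1)

def radialOp (n : ℝ) (x : ℝ → ℝ) (t : ℝ) : ℝ :=
  deriv (deriv x) t - (n - 3) * tanh t * deriv x t + 2 * (n - 3) * (exp (x t) - 1)

def radialProfile (κ : ℝ) (v : ℝ → ℝ) (t : ℝ) : ℝ :=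
  v (2 * arctan (exp t)) - 2 * log (cosh t) - κ

end

section radialProfile

variable {κ : ℝ} {v : ℝ → ℝ} {t : ℝ}

lemma ContDiffOn.differentiableAt_two_arctan_exp {k : WithTop ℕ∞}
    (hv : ContDiffOn ℝ k v (Ioo 0 (π / 2))) (hk : k ≠ 0) (ht : t < 0) :
    DifferentiableAt ℝ v (2 * Real.arctan (Real.exp t)) :=
  (hv.contDiffAt (isOpen_Ioo.mem_nhds (two_arctan_exp_mem_Ioo ht))).differentiableAt hk

lemma hasDerivAt_radialProfile (hv : DifferentiableAt ℝ v (2 * arctan (exp t))) :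
    HasDerivAt (radialProfile κ v) ((deriv v (2 * arctan (exp t)) - 2 * sinh t) / cosh t) t := by
  have hlog : HasDerivAt (fun s ↦ log (cosh s)) (sinh t / cosh t) t :=
    (hasDerivAt_cosh t).log (cosh_pos t).ne'
  refine (((hasDerivAt_comp_two_arctan_exp hv).sub (hlog.const_mul 2)).sub_const κ).congr_deriv ?_
  ring

lemma cosh_mul_deriv_radialProfile_add (hv : DifferentiableAt ℝ v (2 * arctan (exp t))) :
    cosh t * deriv (radialProfile κ v) t + 2 * sinh t = deriv v (2 * arctan (exp t)) := by
  rw [(hasDerivAt_radialProfile hv).deriv]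
  field_simp [(cosh_pos t).ne']
  ring

lemma hasDerivAt_deriv_radialProfile (hv : ContDiffOn ℝ 2 v (Ioo 0 (π / 2))) (ht : t < 0) :
    HasDerivAt (deriv (radialProfile κ v))
      ((deriv (deriv v) (2 * arctan (exp t)) - sinh t * deriv v (2 * arctan (exp t)) - 2)
        / cosh t ^ 2) t := by
  have hv2 : DifferentiableAt ℝ (deriv v) (2 * arctan (exp t)) :=
    (hv.deriv_of_isOpen (m := 1) isOpen_Ioo (by norm_num)).differentiableAt_two_arctan_exp
      one_ne_zero ht
  have heq : (fun s ↦ (deriv v (2 * arctan (exp s)) - 2 * sinh s) / cosh s)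
      =ᶠ[𝓝 t] deriv (radialProfile κ v) := by
    filter_upwards [Iio_mem_nhds ht] with s hs
    exact (hasDerivAt_radialProfile (hv.differentiableAt_two_arctan_exp two_ne_zero hs)).deriv.symm
  refine ((((hasDerivAt_comp_two_arctan_exp hv2).sub ((hasDerivAt_sinh t).const_mul 2)).div
    (hasDerivAt_cosh t) (cosh_pos t).ne').congr_of_eventuallyEq heq.symm).congr_deriv ?_
  simp only [Pi.sub_apply]
  field_simp [(cosh_pos t).ne']
  linear_combination -2 * cosh_sq_sub_sinh_sq t

lemma radialOp_radialProfile {n : ℝ} (hn : 3 < n) (hκ : κ = log ((n - 3) / (n - 2)))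
    (hv : ContDiffOn ℝ 2 v (Ioo 0 (π / 2))) (ht : t < 0) :
    radialOp n (radialProfile κ v) t = angularOp n v (2 * arctan (exp t)) / cosh t ^ 2 := by
  have hn3 : n - 3 ≠ 0 := by linarith
  have hexp : exp (radialProfile κ v t) * ((n - 3) * cosh t ^ 2)
      = (n - 2) * exp (v (2 * arctan (exp t))) := by
    rw [radialProfile, exp_sub, exp_sub, ← log_rpow (cosh_pos t), exp_log (by positivity),
      rpow_two, hκ, exp_log (div_pos (by linarith) (by linarith))]
    field_simp
  rw [radialOp, angularOp, (hasDerivAt_deriv_radialProfile hv ht).deriv,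
    (hasDerivAt_radialProfile (hv.differentiableAt_two_arctan_exp two_ne_zero ht)).deriv,
    tanh_eq_sinh_div_cosh, cos_div_sin_two_arctan_exp]
  field_simp
  linear_combination 2 * hexp + (6 - 2 * n) * cosh_sq_sub_sinh_sq t

end radialProfile

theorem stmt_10 (N : ℕ) (hN : 4 ≤ N) (α κ : ℝ)
    (hκ : κ = Real.log (((N : ℝ) - 3) / ((N : ℝ) - 2)))
    (v : ℝ → ℝ) (hv : ContDiffOn ℝ 2 v (Ioc 0 (π / 2)))
    (x : ℝ → ℝ)
    -- t = log tan (θ/2), i.e. θ = 2 arctan (exp t), and x(t) = v(θ) - v*(θ)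
    (hx : ∀ t : ℝ, x t = v (2 * Real.arctan (Real.exp t))
        - (-2 * Real.log (Real.sin (2 * Real.arctan (Real.exp t))) + κ)) :
    ((∀ θ ∈ Ioo (0:ℝ) (π / 2),
        deriv (deriv v) θ + ((N : ℝ) - 2) * (Real.cos θ / Real.sin θ) * deriv v θ
          + 2 * ((N : ℝ) - 2) * (Real.exp (v θ) - 1) = 0) ∧
      Tendsto v (nhdsWithin 0 (Ioi 0)) (nhds α) ∧
      Tendsto (deriv v) (nhdsWithin 0 (Ioi 0)) (nhds 0)) ↔
    ((∀ t : ℝ, t < 0 →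
        deriv (deriv x) t - ((N : ℝ) - 3) * Real.tanh t * deriv x t
          + 2 * ((N : ℝ) - 3) * (Real.exp (x t) - 1) = 0) ∧
      Tendsto (fun t => x t + 2 * Real.log (Real.cosh t) + κ - α) atBot (nhds 0) ∧
      Tendsto (fun t => Real.cosh t * deriv x t + 2 * Real.sinh t) atBot (nhds 0)) := by
  have hn : (3 : ℝ) < N := by exact_mod_cast hN
  have hvO : ContDiffOn ℝ 2 v (Ioo 0 (π / 2)) := hv.mono Ioo_subset_Ioc_self
  obtain rfl : x = radialProfile κ v := funext fun t ↦ by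
    rw [hx, sin_two_arctan_exp, log_inv, radialProfile]
    ring
  have hode : (∀ θ ∈ Ioo 0 (π / 2), angularOp N v θ = 0) ↔
      ∀ t < 0, radialOp N (radialProfile κ v) t = 0 := by
    rw [forall_mem_Ioo_iff_forall_neg]
    refine forall₂_congr fun t ht ↦ ?_
    rw [radialOp_radialProfile hn hκ hvO ht, div_eq_zero_iff,
      or_iff_left (pow_ne_zero 2 (cosh_pos t).ne')]
  have hvalue : Tendsto v (𝓝[>] 0) (𝓝 α) ↔
      Tendsto (fun t ↦ radialProfile κ v t + 2 * log (cosh t) + κ - α) atBot (𝓝 0) := by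
    rw [← map_two_arctan_exp_atBot, tendsto_map'_iff, ← tendsto_sub_nhds_zero_iff]
    refine tendsto_congr fun t ↦ ?_
    rw [Function.comp_apply, radialProfile]
    ring
  have hslope : Tendsto (deriv v) (𝓝[>] 0) (𝓝 0) ↔
      Tendsto (fun t ↦ cosh t * deriv (radialProfile κ v) t + 2 * sinh t) atBot (𝓝 0) := by
    rw [← map_two_arctan_exp_atBot, tendsto_map'_iff]
    refine tendsto_congr' ?_
    filter_upwards [eventually_lt_atBot 0] with t ht
    exact (cosh_mul_deriv_radialProfile_add
      (hvO.differentiableAt_two_arctan_exp two_ne_zero ht)).symm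
  exact and_congr hode (and_congr hvalue hslope)
end

section
/- Let N ≥ 4 be an integer, α ∈ ℝ, δ := e^{−α}, s₀ ∈ ℝ, r₀ := e^{s₀}, and κ̃ := log((N−3)/(N−2)) − 2 log 2. Suppose u ∈ C²((0,r₀]) ∩ C¹([0,r₀]) satisfies u''(r) + ((N−2)/r) u'(r) + 8(N−2) e^{u(r)} − (2(N−3)δ/(1+δr²)) (r u'(r) + 2) = 0 for all r ∈ (0,r₀], with u(0) = 0 and u'(0) = 0. Define x̃(s) := u(e^s) + 2s − κ̃ for s ∈ (−∞,s₀] and ỹ := x̃'. Then x̃ ∈ C²((−∞,s₀]) satisfies x̃''(s) − (N−3) tanh(s − α/2) x̃'(s) + 2(N−3)(e^{x̃(s)} − 1) = 0 on (−∞,s₀), x̃(s) − 2s + κ̃ → 0 as s → −∞, and e^{−s}(ỹ(s) − 2) → 0 as s → −∞. -/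
/-!
In the logarithmic variable `r = e^s` the Euler operator `r d/dr` becomes `d/ds`, so
`x''(s) = r² u''(r) + r u'(r)` and `x'(s) = r u'(r) + 2`. Multiplying the radial equation
by `r²` and using `tanh (s - α/2) = (δ r² - 1) / (δ r² + 1)` and
`e^{x(s)} = 4 (N-2)/(N-3) · r² e^{u(r)}` gives the equation for `x`. The two limits at
`s → -∞` are `u(0) = 0` and `u'(0) = 0`, read through `x(s) - 2s + κ = u(e^s)` and
`e^{-s}(x'(s) - 2) = u'(e^s)`.
-/

open Real Set Filter Topology

lemma tanh_sub_half (s α : ℝ) :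
    tanh (s - α / 2) = (exp (-α) * exp s ^ 2 - 1) / (exp (-α) * exp s ^ 2 + 1) := by
  have hsq : exp (-α) * exp s ^ 2 = exp (s - α / 2) ^ 2 := by
    rw [← exp_nat_mul, ← exp_nat_mul, ← exp_add]
    ring_nf
  have hne : exp (s - α / 2) ≠ 0 := (exp_pos _).ne'
  rw [hsq, tanh_eq, exp_neg]
  field_simp

lemma exp_add_two_mul_sub_log {q : ℝ} (hq : 0 < q) (a s : ℝ) :
    exp (a + 2 * s - (log q - 2 * log 2)) = 4 / q * exp s ^ 2 * exp a := by
  have h4 : exp (2 * log 2) = 4 := by rw [two_mul, exp_add, exp_log two_pos]; norm_num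
  have hsq : exp (2 * s) = exp s ^ 2 := by rw [sq, ← exp_add, two_mul]
  rw [show a + 2 * s - (log q - 2 * log 2) = a + 2 * s + 2 * log 2 - log q by ring,
    exp_sub, exp_add, exp_add, exp_log hq, h4, hsq]
  ring

lemma derivWithin_Icc_of_mem_Ioo {f : ℝ → ℝ} {a b r : ℝ} (hr : r ∈ Ioo a b) :
    derivWithin f (Icc a b) r = deriv f r :=
  derivWithin_of_mem_nhds (Icc_mem_nhds hr.1 hr.2)

lemma derivWithin_derivWithin_Icc_of_mem_Ioo {f : ℝ → ℝ} {a b r : ℝ} (hr : r ∈ Ioo a b) :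
    derivWithin (derivWithin f (Icc a b)) (Icc a b) r = deriv (deriv f) r := by
  rw [derivWithin_Icc_of_mem_Ioo hr]
  refine EventuallyEq.deriv_eq ?_
  filter_upwards [Ioo_mem_nhds hr.1 hr.2] with t ht using derivWithin_Icc_of_mem_Ioo ht

lemma ContinuousWithinAt.tendsto_comp_exp_atBot {f : ℝ → ℝ} {a : ℝ} (ha : 0 < a)
    (hf : ContinuousWithinAt f (Icc 0 a) 0) :
    Tendsto (fun s => f (exp s)) atBot (𝓝 (f 0)) :=
  (hf.mono_of_mem_nhdsWithin (Icc_mem_nhdsGT ha)).tendsto.comp tendsto_exp_atBot_nhdsGT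

section LogarithmicVariable

variable {u : ℝ → ℝ} {c κ : ℝ}

lemma hasDerivAt_comp_exp_add_mul_sub {s : ℝ} (hu : DifferentiableAt ℝ u (exp s)) :
    HasDerivAt (fun t => u (exp t) + c * t - κ) (deriv u (exp s) * exp s + c) s := by
  simpa using ((hu.hasDerivAt.comp s (hasDerivAt_exp s)).add
    ((hasDerivAt_id s).const_mul c)).sub_const κ

lemma contDiffOn_comp_exp_add_mul_sub {n : WithTop ℕ∞} {S T : Set ℝ}
    (hu : ContDiffOn ℝ n u S) (hST : MapsTo exp T S) :
    ContDiffOn ℝ n (fun t => u (exp t) + c * t - κ) T :=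
  ((hu.comp contDiff_exp.contDiffOn hST).add (contDiffOn_const.mul contDiffOn_id)).sub
    contDiffOn_const

lemma deriv_deriv_comp_exp_add_mul_sub {U : Set ℝ} {s : ℝ} (hU : IsOpen U)
    (hu : ContDiffOn ℝ 2 u U) (hs : exp s ∈ U) :
    deriv (deriv fun t => u (exp t) + c * t - κ) s
      = deriv (deriv u) (exp s) * exp s ^ 2 + deriv u (exp s) * exp s := by
  have hdu : ∀ r ∈ U, DifferentiableAt ℝ u r := fun r hr =>
    (hu.contDiffAt (hU.mem_nhds hr)).differentiableAt (by norm_num)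
  have hddu : DifferentiableAt ℝ (deriv u) (exp s) :=
    ((hu.deriv_of_isOpen hU (m := 1) (by norm_num)).contDiffAt
      (hU.mem_nhds hs)).differentiableAt (by norm_num)
  have hderiv : deriv (fun t => u (exp t) + c * t - κ)
      =ᶠ[𝓝 s] fun t => deriv u (exp t) * exp t + c := by
    filter_upwards [(hU.preimage continuous_exp).mem_nhds hs] with t ht
    exact (hasDerivAt_comp_exp_add_mul_sub (hdu _ ht)).deriv
  rw [hderiv.deriv_eq]
  have h : HasDerivAt (fun t => deriv u (exp t) * exp t + c)
      (deriv (deriv u) (exp s) * exp s * exp s + deriv u (exp s) * exp s) s :=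
    ((hddu.hasDerivAt.comp s (hasDerivAt_exp s)).mul (hasDerivAt_exp s)).add_const c
  rw [h.deriv]
  ring

end LogarithmicVariable

lemma logarithmic_ode_of_radial_ode {N δ r u₁ u₂ E X : ℝ} (hr : 0 < r) (hδ : 0 < δ)
    (hX : 2 * (N - 3) * X = 8 * (N - 2) * (r ^ 2 * E))
    (h : u₂ + ((N - 2) / r) * u₁ + 8 * (N - 2) * E
      - (2 * (N - 3) * δ / (1 + δ * r ^ 2)) * (r * u₁ + 2) = 0) :
    (u₂ * r ^ 2 + u₁ * r) - (N - 3) * ((δ * r ^ 2 - 1) / (δ * r ^ 2 + 1)) * (u₁ * r + 2)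
      + 2 * (N - 3) * (X - 1) = 0 := by
  have hden : δ * r ^ 2 + 1 ≠ 0 := by positivity
  rw [add_comm 1] at h
  field_simp at h ⊢
  linear_combination r * h + hX * (δ * r ^ 2 + 1)

theorem stmt_12 (N : ℕ) (hN : 4 ≤ N) (α δ : ℝ) (hδ : δ = Real.exp (-α))
    (s₀ r₀ : ℝ) (hr₀ : r₀ = Real.exp s₀)
    (κ : ℝ) (hκ : κ = Real.log (((N : ℝ) - 3) / ((N : ℝ) - 2)) - 2 * Real.log 2)
    (u : ℝ → ℝ)
    (hu2 : ContDiffOn ℝ 2 u (Ioc 0 r₀)) (hu1 : ContDiffOn ℝ 1 u (Icc 0 r₀))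
    (hode : ∀ r ∈ Ioc (0:ℝ) r₀,
      derivWithin (derivWithin u (Icc 0 r₀)) (Icc 0 r₀) r
        + (((N : ℝ) - 2) / r) * derivWithin u (Icc 0 r₀) r
        + 8 * ((N : ℝ) - 2) * Real.exp (u r)
        - (2 * ((N : ℝ) - 3) * δ / (1 + δ * r ^ 2)) * (r * derivWithin u (Icc 0 r₀) r + 2) = 0)
    (hu0 : u 0 = 0) (hu0' : derivWithin u (Icc 0 r₀) 0 = 0)
    (x : ℝ → ℝ) (hx : x = fun s => u (Real.exp s) + 2 * s - κ) :
    ContDiffOn ℝ 2 x (Iic s₀) ∧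
    (∀ s : ℝ, s < s₀ →
      deriv (deriv x) s - ((N : ℝ) - 3) * Real.tanh (s - α / 2) * deriv x s
        + 2 * ((N : ℝ) - 3) * (Real.exp (x s) - 1) = 0) ∧
    Tendsto (fun s => x s - 2 * s + κ) atBot (nhds 0) ∧
    Tendsto (fun s => Real.exp (-s) * (deriv x s - 2)) atBot (nhds 0) := by
  subst hx hδ hr₀ hκ
  have hN3 : (3 : ℝ) < N := by exact_mod_cast hN
  have hmem : ∀ s, s < s₀ → exp s ∈ Ioo 0 (exp s₀) := fun s hs =>
    ⟨exp_pos s, exp_lt_exp.2 hs⟩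
  have hu2o : ContDiffOn ℝ 2 u (Ioo 0 (exp s₀)) := hu2.mono Ioo_subset_Ioc_self
  have hdu : ∀ s, s < s₀ → DifferentiableAt ℝ u (exp s) := fun s hs =>
    (hu2o.differentiableOn (by norm_num)).differentiableAt
      (Ioo_mem_nhds (hmem s hs).1 (hmem s hs).2)
  refine ⟨contDiffOn_comp_exp_add_mul_sub hu2 fun s hs => ⟨exp_pos s, exp_le_exp.2 hs⟩,
    fun s hs => ?_, ?_, ?_⟩
  · have hE := hode _ (Ioo_subset_Ioc_self (hmem s hs))
    rw [derivWithin_derivWithin_Icc_of_mem_Ioo (hmem s hs),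
      derivWithin_Icc_of_mem_Ioo (hmem s hs)] at hE
    rw [deriv_deriv_comp_exp_add_mul_sub isOpen_Ioo hu2o (hmem s hs),
      (hasDerivAt_comp_exp_add_mul_sub (hdu s hs)).deriv, tanh_sub_half]
    refine logarithmic_ode_of_radial_ode (exp_pos s) (exp_pos _) ?_ hE
    rw [exp_add_two_mul_sub_log (div_pos (by linarith) (by linarith))]
    field_simp [show (N : ℝ) - 3 ≠ 0 by linarith]
    ring
  · rw [← hu0]
    exact ((hu1.continuousOn 0 (left_mem_Icc.2 (exp_pos s₀).le)).tendsto_comp_exp_atBot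
      (exp_pos s₀)).congr fun s => by ring
  · have hcont := (hu1.continuousOn_derivWithin (uniqueDiffOn_Icc (exp_pos s₀)) le_rfl) 0
      (left_mem_Icc.2 (exp_pos s₀).le)
    rw [← hu0']
    refine (hcont.tendsto_comp_exp_atBot (exp_pos s₀)).congr' ?_
    filter_upwards [Iio_mem_atBot s₀] with s hs
    rw [(hasDerivAt_comp_exp_add_mul_sub (hdu s hs)).deriv, derivWithin_Icc_of_mem_Ioo (hmem s hs),
      add_sub_cancel_right, mul_left_comm, ← exp_add, neg_add_cancel, exp_zero, mul_one]
end

section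
/- Let N ≥ 4 be an integer, r₀ > 0, and let u₀ : [0,r₀] → ℝ be continuous. Suppose φ ∈ C²((0,r₀]) ∩ C¹([0,r₀]) satisfies φ''(r) + ((N−2)/r) φ'(r) + 8(N−2) e^{u₀(r)} φ(r) = 0 for all r ∈ (0,r₀], with φ(0) = 0 and φ'(0) = 0. Then φ(r) = 0 for all r ∈ [0,r₀]. -/
/-! The energy `g = φ² + φ'²` satisfies `g' ≤ C g` on `(0, r₀)`: the singular term contributes
`-2 (N - 2) φ'² / r ≤ 0`, so it can only dissipate energy, and `e^{u₀}` is bounded on `[0, r₀]`.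
Hence `e^{-C r} g` is antitone on `[0, r₀]`; it vanishes at `0`, so `g` vanishes identically. -/

open Real Set Topology

/-- Grönwall's inequality without derivative information at `a`, where the radial equation is
singular. -/
theorem le_zero_of_hasDerivAt_le_mul_self {g g' : ℝ → ℝ} {a b C : ℝ}
    (hg : ContinuousOn g (Icc a b)) (ha : g a ≤ 0)
    (hderiv : ∀ x ∈ Ioo a b, HasDerivAt g (g' x) x) (hle : ∀ x ∈ Ioo a b, g' x ≤ C * g x) :
    ∀ x ∈ Icc a b, g x ≤ 0 := by
  have hanti : AntitoneOn (fun x ↦ exp (-C * x) * g x) (Icc a b) := by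
    refine antitoneOn_of_hasDerivWithinAt_nonpos (convex_Icc a b)
      (f' := fun x ↦ exp (-C * x) * (g' x - C * g x))
      ((continuous_exp.comp (continuous_const.mul continuous_id)).continuousOn.mul hg)
      (fun x hx ↦ ?_) (fun x hx ↦ ?_) <;> rw [interior_Icc] at hx
    · have hexp : HasDerivAt (fun x ↦ exp (-C * x)) (exp (-C * x) * -C) x := by
        simpa using ((hasDerivAt_id x).const_mul (-C)).exp
      exact ((hexp.mul (hderiv x hx)).congr_deriv (by ring)).hasDerivWithinAt
    · exact mul_nonpos_of_nonneg_of_nonpos (exp_pos _).le (sub_nonpos.2 (hle x hx))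
  intro x hx
  have hax : exp (-C * x) * g x ≤ exp (-C * a) * g a :=
    hanti ⟨le_rfl, hx.1.trans hx.2⟩ hx hx.1
  exact nonpos_of_mul_nonpos_right
    (hax.trans (mul_nonpos_of_nonneg_of_nonpos (exp_pos _).le ha)) (exp_pos _)

theorem two_mul_add_two_mul_le_of_damped {p q q' a k K : ℝ} (ha : 0 ≤ a) (hk : 0 ≤ k)
    (hkK : k ≤ K) (hq' : q' + a * q + k * p = 0) :
    2 * p * q + 2 * q * q' ≤ (1 + K) * (p ^ 2 + q ^ 2) := by
  have hq'' : q' = -(a * q) - k * p := by linarith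
  subst hq''
  nlinarith [mul_nonneg ha (sq_nonneg q), mul_nonneg hk (sq_nonneg (p + q)),
    mul_nonneg (sub_nonneg.2 hkK) (add_nonneg (sq_nonneg p) (sq_nonneg q)), sq_nonneg (p - q)]

theorem hasDerivAt_derivWithin_of_contDiffAt {f : ℝ → ℝ} {s : Set ℝ} {x : ℝ}
    (hf : ContDiffAt ℝ 2 f x) (hs : s ∈ 𝓝 x) :
    HasDerivAt (derivWithin f s) (derivWithin (derivWithin f s) s x) x := by
  have heq : derivWithin f s =ᶠ[𝓝 x] deriv f :=
    (eventually_mem_nhds_iff.2 hs).mono fun y hy ↦ derivWithin_of_mem_nhds hy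
  have hdiff : DifferentiableAt ℝ (deriv f) x :=
    (hf.derivWithin (m := 1) (by norm_num)).differentiableAt one_ne_zero
  rw [derivWithin_of_mem_nhds hs, heq.deriv_eq]
  exact hdiff.hasDerivAt.congr_of_eventuallyEq heq

theorem stmt_14 (N : ℕ) (hN : 4 ≤ N) (r₀ : ℝ) (hr₀ : 0 < r₀)
    (u₀ : ℝ → ℝ) (hu₀ : ContinuousOn u₀ (Icc 0 r₀))
    (φ : ℝ → ℝ)
    (hφ2 : ContDiffOn ℝ 2 φ (Ioc 0 r₀)) (hφ1 : ContDiffOn ℝ 1 φ (Icc 0 r₀))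
    (hode : ∀ r ∈ Ioc (0:ℝ) r₀,
      derivWithin (derivWithin φ (Icc 0 r₀)) (Icc 0 r₀) r
        + (((N : ℝ) - 2) / r) * derivWithin φ (Icc 0 r₀) r
        + 8 * ((N : ℝ) - 2) * Real.exp (u₀ r) * φ r = 0)
    (hφ0 : φ 0 = 0) (hφ0' : derivWithin φ (Icc 0 r₀) 0 = 0) :
    ∀ r ∈ Icc (0:ℝ) r₀, φ r = 0 := by
  set s := Icc (0:ℝ) r₀
  set ψ := derivWithin φ s
  obtain ⟨K, hK⟩ := isCompact_Icc.bddAbove_image (continuous_exp.comp_continuousOn hu₀)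
  have hN2 : (0:ℝ) ≤ N - 2 := by
    have : (4:ℝ) ≤ N := by exact_mod_cast hN
    linarith
  have hg : ContinuousOn (fun x ↦ φ x ^ 2 + ψ x ^ 2) s :=
    (hφ1.continuousOn.pow 2).add
      ((hφ1.continuousOn_derivWithin (uniqueDiffOn_Icc hr₀) le_rfl).pow 2)
  have hderiv : ∀ x ∈ Ioo 0 r₀, HasDerivAt (fun x ↦ φ x ^ 2 + ψ x ^ 2)
      (2 * φ x * ψ x + 2 * ψ x * derivWithin ψ s x) x := fun x hx ↦ by
    have hs : s ∈ 𝓝 x := Icc_mem_nhds hx.1 hx.2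
    have hφ2x : ContDiffAt ℝ 2 φ x := hφ2.contDiffAt (Ioc_mem_nhds hx.1 hx.2)
    have hφx : HasDerivAt φ (ψ x) x := by
      rw [show ψ x = deriv φ x from derivWithin_of_mem_nhds hs]
      exact (hφ2x.differentiableAt two_ne_zero).hasDerivAt
    have hψx := hasDerivAt_derivWithin_of_contDiffAt hφ2x hs
    exact ((hφx.pow 2).add (hψx.pow 2)).congr_deriv (by simp only [Nat.cast_ofNat]; ring)
  have hdamped : ∀ x ∈ Ioo 0 r₀, 2 * φ x * ψ x + 2 * ψ x * derivWithin ψ s x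
      ≤ (1 + 8 * (N - 2) * K) * (φ x ^ 2 + ψ x ^ 2) := fun x hx ↦
    two_mul_add_two_mul_le_of_damped (div_nonneg hN2 hx.1.le) (by positivity)
      (mul_le_mul_of_nonneg_left (hK ⟨x, Ioo_subset_Icc_self hx, rfl⟩ : exp (u₀ x) ≤ K)
        (by positivity))
      (by linear_combination hode x (Ioo_subset_Ioc_self hx))
  have hle := le_zero_of_hasDerivAt_le_mul_self hg (by simp [hφ0, ψ, hφ0']) hderiv hdamped
  intro r hr
  nlinarith [hle r hr, sq_nonneg (φ r), sq_nonneg (ψ r)]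
end

section
/- Let N ≥ 4 be an integer, κ̃ := log((N−3)/(N−2)) − 2 log 2, and κ̄ := log(2(N−3)). Let x̄ ∈ C²(ℝ) be the unique entire solution of x̄'' + (N−3)x̄' + 2(N−3)(e^{x̄} − 1) = 0 with x̄(s) − 2s + κ̄ − log(8(N−2)) → 0 and e^{−s}(x̄'(s) − 2) → 0 as s → −∞, and set ȳ := x̄'. For α ∈ ℝ let x̃(·,α) ∈ C²((−∞,α/2]) be a solution of x̃'' − (N−3) tanh(s − α/2) x̃' + 2(N−3)(e^{x̃} − 1) = 0 on (−∞,α/2) with x̃(s,α) − 2s + κ̃ → 0 and e^{−s}(x̃'(s,α) − 2) → 0 as s → −∞, and set ỹ := x̃'. Then for every s₀ ∈ ℝ and every ε > 0 there exists α₀ > max(2s₀, 0) such that for all α > α₀: sup_{s ≤ s₀} |x̄(s) − x̃(s,α)| < ε and sup_{s ≤ s₀} |ȳ(s) − ỹ(s,α)| < ε. -/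
/-!
Put `d = N - 3` and `w = x̃(·, α) - x̄`. Since `κ̄ - log 8(N-2) = κ̃`, both solutions have the same
asymptotics at `-∞`, so `w, w' → 0` there. Subtracting the equations gives
`w'' + d w' = d (tanh (s - α/2) + 1) x̃' - 2d e^{x̄} (e^w - 1)`, and because
`tanh (s - α/2) + 1 ≤ 2 e^{2s} e^{-α}` and `e^{x̄} = O(e^{2s})`, the right-hand side is
`O(e^{2s} (e^{-α} (1 + |w'|) + |w|))` as long as `|w| ≤ 1`. Integrating against `e^{ds}` from `-∞`,
a continuity argument keeps `|w|, |w'| < ρ` on a half-line `(-∞, S]` where `e^{2s}` is small, as soon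
as `e^{-α} ≤ ρ`. On `[S, s₀]` Gronwall's inequality loses only the fixed factor `e^{L (s₀ - S)}`, so
choosing first `ρ` and then `α` large gives the claim.
-/

open Real Set Filter Topology

theorem Real.tanh_add_one_le (x : ℝ) : tanh x + 1 ≤ 2 * exp (2 * x) := by
  have hx := exp_pos x
  have hsum : 0 < exp x + exp (-x) := by positivity
  rw [tanh_eq, div_add_one hsum.ne', div_le_iff₀ hsum, show 2 * x = x + x by ring, exp_add,
    exp_neg]
  field_simp
  nlinarith [pow_pos hx 3]

theorem log_two_mul_sub_log_eight_mul {a b : ℝ} (ha : a ≠ 0) (hb : b ≠ 0) :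
    log (2 * a) - log (8 * b) = log (a / b) - 2 * log 2 := by
  rw [log_mul two_ne_zero ha, log_mul (by norm_num) hb, log_div ha hb,
    show (8 : ℝ) = 2 ^ 3 by norm_num, log_pow]
  push_cast
  ring

theorem ContDiffOn.hasDerivAt_deriv {f : ℝ → ℝ} {s : Set ℝ} {x : ℝ} (hf : ContDiffOn ℝ 2 f s)
    (hx : s ∈ 𝓝 x) : HasDerivAt f (deriv f x) x ∧ HasDerivAt (deriv f) (deriv (deriv f) x) x := by
  refine ⟨((hf.contDiffAt hx).differentiableAt (by norm_num)).hasDerivAt, ?_⟩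
  have hf' : ContDiffOn ℝ 1 (deriv f) (interior s) :=
    (hf.mono interior_subset).deriv_of_isOpen isOpen_interior (by norm_num)
  exact ((hf'.differentiableOn (by norm_num)).differentiableAt
    (isOpen_interior.mem_nhds (mem_interior_iff_mem_nhds.2 hx))).hasDerivAt

theorem exists_abs_le_on_Iic_of_tendsto_atBot {f : ℝ → ℝ} {c : ℝ} (hf : Continuous f)
    (hlim : Tendsto f atBot (𝓝 c)) (b : ℝ) : ∃ M, ∀ t ≤ b, |f t| ≤ M := by
  obtain ⟨M₁, hM₁⟩ := (hlim.norm.isBoundedUnder_le).eventually_le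
  obtain ⟨a, ha⟩ := eventually_atBot.1 hM₁
  obtain ⟨M₂, hM₂⟩ := (isCompact_Icc (a := a) (b := b)).exists_bound_of_continuousOn hf.continuousOn
  refine ⟨max M₁ M₂, fun t ht => ?_⟩
  rcases le_total t a with hta | hta
  · exact (ha t hta).trans (le_max_left _ _)
  · exact (hM₂ t ⟨hta, ht⟩).trans (le_max_right _ _)

theorem tendsto_of_tendsto_exp_neg_mul {f : ℝ → ℝ}
    (h : Tendsto (fun t => exp (-t) * f t) atBot (𝓝 0)) : Tendsto f atBot (𝓝 0) := by
  simpa [← mul_assoc, ← exp_add] using tendsto_exp_atBot.mul h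

theorem ContinuousOn.forall_lt_of_induction {g : ℝ → ℝ} {b c : ℝ} (hg : ContinuousOn g (Iic b))
    (h_atBot : ∀ᶠ t in atBot, g t < c) (h_step : ∀ s ≤ b, (∀ t < s, g t < c) → g s < c) :
    ∀ t ≤ b, g t < c := by
  by_contra! ⟨t₀, ht₀, hbad⟩
  obtain ⟨a, ha⟩ := eventually_atBot.1 h_atBot
  set S := Icc (min a t₀) t₀ ∩ g ⁻¹' Ici c
  have hS : IsCompact S := isCompact_Icc.of_isClosed_subset
    ((hg.mono fun t ht => ht.2.trans ht₀).preimage_isClosed_of_isClosed isClosed_Icc isClosed_Ici)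
    inter_subset_left
  have hSne : S.Nonempty := ⟨t₀, ⟨min_le_right _ _, le_rfl⟩, hbad⟩
  have hmem := hS.sInf_mem hSne
  refine (h_step _ (hmem.1.2.trans ht₀) fun t ht => ?_).not_ge hmem.2
  rcases le_total t (min a t₀) with hta | hta
  · exact ha t (hta.trans (min_le_left _ _))
  · by_contra! hct
    exact notMem_of_lt_csInf ht hS.bddBelow ⟨⟨hta, ht.le.trans hmem.1.2⟩, hct⟩

theorem norm_le_of_norm_deriv_le_of_tendsto_atBot {E : Type*} [NormedAddCommGroup E]
    [NormedSpace ℝ E] {f f' : ℝ → E} {F F' : ℝ → ℝ} {s : ℝ}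
    (hf : ∀ t ≤ s, HasDerivAt f (f' t) t) (hF : ∀ t, HasDerivAt F (F' t) t)
    (hf0 : Tendsto f atBot (𝓝 0)) (hF0 : Tendsto F atBot (𝓝 0))
    (hbound : ∀ t < s, ‖f' t‖ ≤ F' t) : ‖f s‖ ≤ F s := by
  have hfence : ∀ a ≤ s, ‖f s‖ ≤ ‖f a‖ + F s - F a := fun a ha =>
    image_norm_le_of_norm_deriv_right_le_deriv_boundary (B := fun t => ‖f a‖ + F t - F a)
      (fun t ht => (hf t ht.2).continuousAt.continuousWithinAt)
      (fun t ht => (hf t ht.2.le).hasDerivWithinAt) (by simp)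
      (fun t => ((hF t).const_add _).sub_const _) (fun t ht => hbound t ht.2) ⟨ha, le_rfl⟩
  have hlim : Tendsto (fun a => ‖f a‖ + F s - F a) atBot (𝓝 (F s)) := by
    simpa using (hf0.norm.add_const (F s)).sub hF0
  exact ge_of_tendsto hlim ((eventually_le_atBot s).mono hfence)

theorem hasDerivAt_mul_exp_div (B : ℝ) {c : ℝ} (hc : c ≠ 0) (t : ℝ) :
    HasDerivAt (fun t => B * exp (c * t) / c) (B * exp (c * t)) t := by
  have hlin : HasDerivAt (fun t => c * t) c t := by simpa using (hasDerivAt_id t).const_mul c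
  exact ((hlin.exp.const_mul B).div_const c).congr_deriv (by field_simp)

theorem tendsto_mul_exp_div_atBot (B : ℝ) {c : ℝ} (hc : 0 < c) :
    Tendsto (fun t => B * exp (c * t) / c) atBot (𝓝 0) := by
  simpa using ((tendsto_exp_atBot.comp (tendsto_id.const_mul_atBot hc)).const_mul B).div_const c

theorem abs_le_of_abs_deriv_add_mul_le_exp {d B s : ℝ} {f f' : ℝ → ℝ} (hd : 0 ≤ d)
    (hf : ∀ t ≤ s, HasDerivAt f (f' t) t) (hf0 : Tendsto f atBot (𝓝 0))
    (hB : ∀ t < s, |f' t + d * f t| ≤ B * exp (2 * t)) :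
    |f s| ≤ B * exp (2 * s) / (d + 2) := by
  have hg : ∀ t ≤ s, HasDerivAt (fun t => exp (d * t) * f t)
      (exp (d * t) * (f' t + d * f t)) t := fun t ht => by
    have hlin : HasDerivAt (fun t => d * t) d t := by simpa using (hasDerivAt_id t).const_mul d
    exact (hlin.exp.mul (hf t ht)).congr_deriv (by ring)
  have hg0 : Tendsto (fun t => exp (d * t) * f t) atBot (𝓝 0) := by
    have hbdd : IsBoundedUnder (· ≤ ·) atBot (fun t => ‖exp (d * t)‖) :=
      isBoundedUnder_of_eventually_le (a := 1) <| (eventually_le_atBot 0).mono fun t ht => by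
        rw [norm_of_nonneg (exp_pos _).le, exp_le_one_iff]; nlinarith
    simpa only [mul_comm] using hf0.zero_mul_isBoundedUnder_le hbdd
  have hweighted := norm_le_of_norm_deriv_le_of_tendsto_atBot hg
    (hasDerivAt_mul_exp_div B (c := d + 2) (by positivity)) hg0
    (tendsto_mul_exp_div_atBot B (by positivity)) fun t ht => by
      rw [norm_mul, norm_of_nonneg (exp_pos _).le, add_mul, exp_add, mul_left_comm]
      exact mul_le_mul_of_nonneg_left (hB t ht) (exp_pos _).le
  rw [norm_mul, norm_of_nonneg (exp_pos _).le, add_mul, exp_add, mul_left_comm, mul_div_assoc]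
    at hweighted
  exact le_of_mul_le_mul_left hweighted (exp_pos _)

theorem norm_le_of_abs_deriv_deriv_add_mul_le_exp {d B s : ℝ} {w w' w'' : ℝ → ℝ} (hd : 0 ≤ d)
    (hw : ∀ t ≤ s, HasDerivAt w (w' t) t) (hw' : ∀ t ≤ s, HasDerivAt w' (w'' t) t)
    (hw0 : Tendsto w atBot (𝓝 0)) (hw'0 : Tendsto w' atBot (𝓝 0))
    (hB : ∀ t < s, |w'' t + d * w' t| ≤ B * exp (2 * t)) :
    ‖(w s, w' s)‖ ≤ B * exp (2 * s) / 2 := by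
  have hB0 : 0 ≤ B :=
    nonneg_of_mul_nonneg_left ((abs_nonneg _).trans (hB (s - 1) (by linarith))) (exp_pos _)
  have hw'_le : ∀ t ≤ s, |w' t| ≤ B / (d + 2) * exp (2 * t) := fun t ht =>
    (abs_le_of_abs_deriv_add_mul_le_exp hd (fun u hu => hw' u (hu.trans ht)) hw'0
      fun u hu => hB u (hu.trans_le ht)).trans_eq (by ring)
  have hw_le : |w s| ≤ B / (d + 2) * exp (2 * s) / 2 :=
    norm_le_of_norm_deriv_le_of_tendsto_atBot hw (hasDerivAt_mul_exp_div _ two_ne_zero)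
      hw0 (tendsto_mul_exp_div_atBot _ two_pos) fun t ht => hw'_le t ht.le
  have hdiv : B / (d + 2) ≤ B / 2 :=
    div_le_div_of_nonneg_left hB0 two_pos (by linarith)
  have he := exp_pos (2 * s)
  have hB2 : 0 ≤ B / (d + 2) := by positivity
  rw [Prod.norm_def, Real.norm_eq_abs, Real.norm_eq_abs]
  exact max_le (by nlinarith) (by nlinarith [hw'_le s le_rfl])

theorem gronwallBound_le_add_mul_exp {δ K ε : ℝ} (x : ℝ) (hK : 1 ≤ K) (hε : 0 ≤ ε) :
    gronwallBound δ K ε x ≤ (δ + ε) * exp (K * x) := by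
  rw [gronwallBound_of_K_ne_0 (by positivity)]
  have hεK : ε / K ≤ ε := div_le_self hε hK
  have hεK0 : 0 ≤ ε / K := by positivity
  have he := exp_pos (K * x)
  rcases le_total 1 (exp (K * x)) with h1 | h1 <;> nlinarith

/-- The differential inequality satisfied on `(-∞, s₀]` by `w = x̃(·, α) - x̄`, with `η = e^{-α}`. -/
structure DampedPerturbation (d C η s₀ : ℝ) (w w' w'' : ℝ → ℝ) : Prop where
  hasDerivAt : ∀ t ≤ s₀, HasDerivAt w (w' t) t
  hasDerivAt_deriv : ∀ t ≤ s₀, HasDerivAt w' (w'' t) t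
  tendsto_atBot : Tendsto w atBot (𝓝 0)
  tendsto_deriv_atBot : Tendsto w' atBot (𝓝 0)
  abs_le : ∀ t ≤ s₀, |w t| ≤ 1 →
    |w'' t + d * w' t| ≤ C * exp (2 * t) * (η * (1 + |w' t|) + |w t|)

namespace DampedPerturbation

variable {d C η s₀ : ℝ} {w w' w'' : ℝ → ℝ}

theorem tendsto_norm (h : DampedPerturbation d C η s₀ w w' w'') :
    Tendsto (fun t => ‖(w t, w' t)‖) atBot (𝓝 0) := by
  simpa using (h.tendsto_atBot.prodMk_nhds h.tendsto_deriv_atBot).norm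

theorem continuousOn_norm (h : DampedPerturbation d C η s₀ w w' w'') :
    ContinuousOn (fun t => ‖(w t, w' t)‖) (Iic s₀) := fun t ht =>
  ((h.hasDerivAt t ht).continuousAt.prodMk
    (h.hasDerivAt_deriv t ht).continuousAt).norm.continuousWithinAt

theorem norm_lt_on_Iic (h : DampedPerturbation d C η s₀ w w' w'') (hd : 0 ≤ d)
    (hC : 0 ≤ C) {S ρ : ℝ} (hS : S ≤ s₀) (hCS : C * exp (2 * S) ≤ 1 / 2) (hρ : 0 < ρ)
    (hρ1 : ρ ≤ 1) (hηρ : η ≤ ρ) : ∀ t ≤ S, ‖(w t, w' t)‖ < ρ := by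
  refine (h.continuousOn_norm.mono (Iic_subset_Iic.2 hS)).forall_lt_of_induction
    (h.tendsto_norm.eventually_lt_const hρ) fun s hs hlt => ?_
  have hB : ∀ t < s, |w'' t + d * w' t| ≤ 3 * C * ρ * exp (2 * t) := fun t ht => by
    have hwt : |w t| ≤ ρ := (norm_fst_le _).trans (hlt t ht).le
    have hw't : |w' t| ≤ ρ := (norm_snd_le _).trans (hlt t ht).le
    refine (h.abs_le t (by linarith) (hwt.trans hρ1)).trans ?_
    have hsum : η * (1 + |w' t|) + |w t| ≤ 3 * ρ := by nlinarith [abs_nonneg (w' t)]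
    linarith [mul_le_mul_of_nonneg_left hsum (mul_nonneg hC (exp_pos (2 * t)).le)]
  have hCs : C * exp (2 * s) ≤ 1 / 2 :=
    (mul_le_mul_of_nonneg_left (exp_le_exp.2 (by linarith)) hC).trans hCS
  calc ‖(w s, w' s)‖ ≤ 3 * C * ρ * exp (2 * s) / 2 :=
        norm_le_of_abs_deriv_deriv_add_mul_le_exp hd
          (fun t ht => h.hasDerivAt t (by linarith))
          (fun t ht => h.hasDerivAt_deriv t (by linarith))
          h.tendsto_atBot h.tendsto_deriv_atBot hB
    _ < ρ := by nlinarith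

theorem norm_le_gronwallBound (h : DampedPerturbation d C η s₀ w w' w'') (hd : 0 ≤ d)
    (hC : 0 ≤ C) (hη : 0 ≤ η) (hη1 : η ≤ 1) {S s : ℝ} (hSs : S ≤ s) (hs : s ≤ s₀)
    (hw : ∀ t ∈ Ico S s, |w t| ≤ 1) :
    ‖(w s, w' s)‖ ≤ gronwallBound ‖(w S, w' S)‖ (1 + d + 2 * C * exp (2 * s₀))
      (C * exp (2 * s₀) * η) (s - S) := by
  have hderiv : ∀ t ∈ Icc S s, HasDerivAt (fun t => (w t, w' t)) (w' t, w'' t) t := fun t ht =>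
    (h.hasDerivAt t (ht.2.trans hs)).prodMk (h.hasDerivAt_deriv t (ht.2.trans hs))
  refine norm_le_gronwallBound_of_norm_deriv_right_le
    (fun t ht => (hderiv t ht).continuousAt.continuousWithinAt)
    (fun t ht => (hderiv t (Ico_subset_Icc_self ht)).hasDerivWithinAt) le_rfl
    (fun t ht => ?_) s ⟨hSs, le_rfl⟩
  set n := ‖(w t, w' t)‖
  have hwt : |w t| ≤ n := norm_fst_le (w t, w' t)
  have hw't : |w' t| ≤ n := norm_snd_le (w t, w' t)
  have hts₀ : t ≤ s₀ := ht.2.le.trans hs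
  have hA : C * exp (2 * t) ≤ C * exp (2 * s₀) :=
    mul_le_mul_of_nonneg_left (exp_le_exp.2 (by linarith)) hC
  have hA0 : 0 ≤ C * exp (2 * t) := mul_nonneg hC (exp_pos _).le
  have hsum : η * (1 + |w' t|) + |w t| ≤ η + 2 * n := by nlinarith [abs_nonneg (w' t)]
  have hw''t : |w'' t| ≤ C * exp (2 * t) * (η + 2 * n) + d * n := by
    have h1 := h.abs_le t hts₀ (hw t ht)
    have h2 : |w'' t| ≤ |w'' t + d * w' t| + d * |w' t| := by
      simpa [abs_mul, abs_of_nonneg hd] using abs_sub (w'' t + d * w' t) (d * w' t)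
    nlinarith [mul_le_mul_of_nonneg_left hsum hA0]
  have hn : 0 ≤ n := norm_nonneg _
  rw [Prod.norm_def, Real.norm_eq_abs, Real.norm_eq_abs]
  refine max_le (by nlinarith [mul_nonneg hC (exp_pos (2 * s₀)).le]) ?_
  nlinarith [mul_le_mul_of_nonneg_right hA (by positivity : 0 ≤ η + 2 * n)]

theorem eventually_norm_lt (hd : 0 ≤ d) (hC : 0 ≤ C) (s₀ : ℝ) {ε : ℝ} (hε : 0 < ε) :
    ∀ᶠ η in 𝓝[>] 0, ∀ w w' w'' : ℝ → ℝ, DampedPerturbation d C η s₀ w w' w'' →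
      ∀ t ≤ s₀, ‖(w t, w' t)‖ < ε := by
  obtain ⟨S, hSs₀, hCS⟩ : ∃ S ≤ s₀, C * exp (2 * S) ≤ 1 / 2 := by
    have hlim : Tendsto (fun t => C * exp (2 * t)) atBot (𝓝 0) := by
      simpa using (tendsto_exp_atBot.comp (tendsto_id.const_mul_atBot two_pos)).const_mul C
    obtain ⟨S, hS⟩ := eventually_atBot.1 (hlim.eventually (ge_mem_nhds one_half_pos))
    exact ⟨min S s₀, min_le_right _ _, hS _ (min_le_left _ _)⟩
  -- `E` bounds the Gronwall growth on `[S, s₀]`; `ρ` is chosen small enough to absorb it.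
  set L := 1 + d + 2 * C * exp (2 * s₀)
  set E := exp (L * (s₀ - S))
  set m := min ε 1
  set ρ := m / (4 * E)
  have hm : 0 < m := lt_min hε one_pos
  have hE : 1 ≤ E := one_le_exp (mul_nonneg (by positivity) (by linarith))
  have hρ : 0 < ρ := by positivity
  have hρm : ρ ≤ m / 4 := div_le_div_of_nonneg_left hm.le (by norm_num) (by linarith)
  have hρ1 : ρ ≤ 1 := hρm.trans (by linarith [min_le_right ε 1])
  have hL : 1 ≤ L := by linarith [mul_nonneg hC (exp_pos (2 * s₀)).le]
  have hsmall : ∀ᶠ η in 𝓝[>] 0, 0 < η ∧ η ≤ ρ ∧ C * exp (2 * s₀) * η ≤ ρ := by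
    have hlin : Tendsto (fun η => C * exp (2 * s₀) * η) (𝓝 0) (𝓝 0) := by
      simpa using (tendsto_id (x := 𝓝 (0 : ℝ))).const_mul (C * exp (2 * s₀))
    exact eventually_mem_nhdsWithin.and (nhdsWithin_le_nhds
      ((eventually_le_nhds hρ).and (hlin.eventually (eventually_le_nhds hρ))))
  filter_upwards [hsmall] with η ⟨hη, hηρ, hCη⟩ w w' w'' h
  have hnear := h.norm_lt_on_Iic hd hC hSs₀ hCS hρ hρ1 hηρ
  have hlt : ∀ t ≤ s₀, ‖(w t, w' t)‖ < m := h.continuousOn_norm.forall_lt_of_induction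
    (h.tendsto_norm.eventually_lt_const hm) fun s hs hprev => by
    rcases le_or_gt s S with hsS | hSs
    · exact (hnear s hsS).trans_le (hρm.trans (by linarith))
    have hw : ∀ t ∈ Ico S s, |w t| ≤ 1 := fun t ht =>
      (norm_fst_le (w t, w' t)).trans ((hprev t ht.2).le.trans (min_le_right _ _))
    calc ‖(w s, w' s)‖ ≤ gronwallBound ‖(w S, w' S)‖ L (C * exp (2 * s₀) * η) (s - S) :=
          h.norm_le_gronwallBound hd hC hη.le (hηρ.trans hρ1) hSs.le hs hw
      _ ≤ (ρ + ρ) * E := (gronwallBound_le_add_mul_exp _ hL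
          (by positivity)).trans (mul_le_mul (add_le_add (hnear S le_rfl).le hCη)
            (exp_le_exp.2 (by gcongr)) (exp_pos _).le (by positivity))
      _ = m / 2 := by simp only [ρ]; field_simp; norm_num
      _ < m := half_lt_self hm
  exact fun t ht => (hlt t ht).trans_le (min_le_left _ _)

end DampedPerturbation

theorem abs_sub_add_mul_sub_le {d α t M K x₀ x₁ x₂ y₀ y₁ y₂ : ℝ} (hd : 0 ≤ d)
    (hx : x₂ - d * tanh (t - α / 2) * x₁ + 2 * d * (exp x₀ - 1) = 0)
    (hy : y₂ + d * y₁ + 2 * d * (exp y₀ - 1) = 0) (hM : |y₁| ≤ M)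
    (hK : exp y₀ ≤ K * exp (2 * t)) (h01 : |x₀ - y₀| ≤ 1) :
    |x₂ - y₂ + d * (x₁ - y₁)| ≤
      2 * d * (M + 1 + 2 * K) * exp (2 * t) * (exp (-α) * (1 + |x₁ - y₁|) + |x₀ - y₀|) := by
  set σ := tanh (t - α / 2) + 1
  have hσ0 : 0 ≤ σ := by linarith [neg_one_lt_tanh (t - α / 2)]
  have hσ : σ ≤ 2 * exp (2 * t) * exp (-α) := by
    have := tanh_add_one_le (t - α / 2)
    rwa [show 2 * (t - α / 2) = 2 * t + -α by ring, exp_add, ← mul_assoc] at this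
  have hM0 : 0 ≤ M := (abs_nonneg _).trans hM
  have hK0 : 0 ≤ K := nonneg_of_mul_nonneg_left ((exp_pos _).le.trans hK) (exp_pos _)
  have hsplit : x₂ - y₂ + d * (x₁ - y₁) =
      d * σ * (y₁ + (x₁ - y₁)) - 2 * d * (exp y₀ * (exp (x₀ - y₀) - 1)) := by
    have hexp : exp x₀ = exp y₀ * exp (x₀ - y₀) := by rw [← exp_add, add_sub_cancel]
    linear_combination hx - hy - 2 * d * hexp
  have hforce :
      |d * σ * (y₁ + (x₁ - y₁))| ≤ d * (2 * exp (2 * t) * exp (-α)) * (M + |x₁ - y₁|) := by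
    rw [abs_mul, abs_mul, abs_of_nonneg hd, abs_of_nonneg hσ0]
    gcongr
    exact (abs_add_le _ _).trans (by linarith)
  have hnonlin : |exp y₀ * (exp (x₀ - y₀) - 1)| ≤ K * exp (2 * t) * (2 * |x₀ - y₀|) := by
    rw [abs_mul, abs_of_pos (exp_pos _)]
    exact mul_le_mul hK (abs_exp_sub_one_le h01) (abs_nonneg _) (by positivity)
  have hgap : 0 ≤ 2 * d * exp (2 * t) *
      (exp (-α) * (1 + 2 * K + (M + 2 * K) * |x₁ - y₁|) + (M + 1) * |x₀ - y₀|) := by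
    positivity
  rw [hsplit]
  calc _ ≤ |d * σ * (y₁ + (x₁ - y₁))| + |2 * d * (exp y₀ * (exp (x₀ - y₀) - 1))| := abs_sub _ _
    _ ≤ d * (2 * exp (2 * t) * exp (-α)) * (M + |x₁ - y₁|) +
        2 * d * (K * exp (2 * t) * (2 * |x₀ - y₀|)) := by
      rw [abs_mul (2 * d), abs_of_nonneg (by positivity : (0 : ℝ) ≤ 2 * d)]
      gcongr
    _ ≤ _ := by linarith

theorem DampedPerturbation.of_sub_of_ode {d α s₀ M K : ℝ} {xb x : ℝ → ℝ} (hd : 0 ≤ d)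
    (hs₀ : s₀ < α / 2) (hxb : ContDiff ℝ 2 xb) (hx : ContDiffOn ℝ 2 x (Iic (α / 2)))
    (hxb_ode : ∀ s, deriv (deriv xb) s + d * deriv xb s + 2 * d * (exp (xb s) - 1) = 0)
    (hx_ode : ∀ s < α / 2,
      deriv (deriv x) s - d * tanh (s - α / 2) * deriv x s + 2 * d * (exp (x s) - 1) = 0)
    (hlim : Tendsto (fun s => x s - xb s) atBot (𝓝 0))
    (hlim' : Tendsto (fun s => deriv x s - deriv xb s) atBot (𝓝 0))
    (hM : ∀ t ≤ s₀, |deriv xb t| ≤ M) (hK : ∀ t ≤ s₀, exp (xb t) ≤ K * exp (2 * t)) :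
    DampedPerturbation d (2 * d * (M + 1 + 2 * K)) (exp (-α)) s₀ (fun s => x s - xb s)
      (fun s => deriv x s - deriv xb s) (fun s => deriv (deriv x) s - deriv (deriv xb) s) := by
  have hx' : ∀ t ≤ s₀, HasDerivAt x (deriv x t) t ∧
      HasDerivAt (deriv x) (deriv (deriv x) t) t := fun t ht =>
    hx.hasDerivAt_deriv (Iic_mem_nhds (by linarith))
  have hxb' : ∀ t, HasDerivAt xb (deriv xb t) t ∧
      HasDerivAt (deriv xb) (deriv (deriv xb) t) t := fun t =>
    hxb.contDiffOn.hasDerivAt_deriv univ_mem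
  exact ⟨fun t ht => (hx' t ht).1.sub (hxb' t).1, fun t ht => (hx' t ht).2.sub (hxb' t).2,
    hlim, hlim', fun t ht hw => abs_sub_add_mul_sub_le hd (hx_ode t (by linarith)) (hxb_ode t)
      (hM t ht) (hK t ht) hw⟩

theorem exists_bounds_of_tendsto_atBot {xb : ℝ → ℝ} {κ : ℝ} (hxb : ContDiff ℝ 2 xb)
    (hlim : Tendsto (fun s => xb s - 2 * s + κ) atBot (𝓝 0))
    (hlim' : Tendsto (fun s => deriv xb s - 2) atBot (𝓝 0)) (s₀ : ℝ) :
    ∃ M K, (∀ t ≤ s₀, |deriv xb t| ≤ M) ∧ ∀ t ≤ s₀, exp (xb t) ≤ K * exp (2 * t) := by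
  obtain ⟨M, hM⟩ := exists_abs_le_on_Iic_of_tendsto_atBot (hxb.continuous_deriv one_le_two)
    (by simpa using hlim'.add_const 2) s₀
  have hexp : Tendsto (fun s => exp (xb s - 2 * s)) atBot (𝓝 (exp (-κ))) :=
    (continuous_exp.tendsto _).comp (by simpa using hlim.sub_const κ)
  obtain ⟨K, hK⟩ := exists_abs_le_on_Iic_of_tendsto_atBot
    (continuous_exp.comp (hxb.continuous.sub (continuous_const.mul continuous_id))) hexp s₀
  refine ⟨M, K, hM, fun t ht => ?_⟩
  rw [← sub_add_cancel (xb t) (2 * t), exp_add]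
  exact mul_le_mul_of_nonneg_right ((le_abs_self _).trans (hK t ht)) (exp_pos _).le

theorem stmt_15 (N : ℕ) (hN : 4 ≤ N) (κt κb : ℝ)
    (hκt : κt = Real.log (((N : ℝ) - 3) / ((N : ℝ) - 2)) - 2 * Real.log 2)
    (hκb : κb = Real.log (2 * ((N : ℝ) - 3)))
    -- x̄ : the entire solution of the autonomous limit problem
    (xb : ℝ → ℝ) (hxb2 : ContDiff ℝ 2 xb)
    (hxbode : ∀ s : ℝ, deriv (deriv xb) s + ((N : ℝ) - 3) * deriv xb s
        + 2 * ((N : ℝ) - 3) * (Real.exp (xb s) - 1) = 0)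
    (hxblim1 : Tendsto (fun s => xb s - 2 * s + κb - Real.log (8 * ((N : ℝ) - 2)))
        atBot (nhds 0))
    (hxblim2 : Tendsto (fun s => Real.exp (-s) * (deriv xb s - 2)) atBot (nhds 0))
    -- x̃(·, α) : solutions of the non-autonomous problem, one for each α
    (xt : ℝ → ℝ → ℝ)
    (hxt2 : ∀ α : ℝ, ContDiffOn ℝ 2 (xt α) (Iic (α / 2)))
    (hxtode : ∀ α : ℝ, ∀ s : ℝ, s < α / 2 →
      deriv (deriv (xt α)) s - ((N : ℝ) - 3) * Real.tanh (s - α / 2) * deriv (xt α) s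
        + 2 * ((N : ℝ) - 3) * (Real.exp (xt α s) - 1) = 0)
    (hxtlim1 : ∀ α : ℝ, Tendsto (fun s => xt α s - 2 * s + κt) atBot (nhds 0))
    (hxtlim2 : ∀ α : ℝ,
      Tendsto (fun s => Real.exp (-s) * (deriv (xt α) s - 2)) atBot (nhds 0)) :
    ∀ s₀ ε : ℝ, 0 < ε → ∃ α₀ : ℝ, α₀ > max (2 * s₀) 0 ∧ ∀ α : ℝ, α > α₀ →
      (∀ s ≤ s₀, |xb s - xt α s| < ε) ∧ (∀ s ≤ s₀, |deriv xb s - deriv (xt α) s| < ε) := by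
  intro s₀ ε hε
  have hN' : (4 : ℝ) ≤ N := by exact_mod_cast hN
  have hd : (0 : ℝ) ≤ N - 3 := by linarith
  have hxblim : Tendsto (fun s => xb s - 2 * s + κt) atBot (𝓝 0) := by
    rw [hκt, ← log_two_mul_sub_log_eight_mul (by linarith) (by linarith), ← hκb]
    exact hxblim1.congr fun s => by ring
  have hxblim' := tendsto_of_tendsto_exp_neg_mul hxblim2
  obtain ⟨M, K, hM, hK⟩ := exists_bounds_of_tendsto_atBot hxb2 hxblim hxblim' s₀
  have hC : 0 ≤ 2 * ((N : ℝ) - 3) * (M + 1 + 2 * K) := by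
    have := (abs_nonneg _).trans (hM s₀ le_rfl)
    have := nonneg_of_mul_nonneg_left ((exp_pos _).le.trans (hK s₀ le_rfl)) (exp_pos _)
    positivity
  obtain ⟨A, hA⟩ := eventually_atTop.1 <| (tendsto_exp_atBot_nhdsGT.comp
    tendsto_neg_atTop_atBot).eventually (DampedPerturbation.eventually_norm_lt hd hC s₀ hε)
  refine ⟨max A (max (2 * s₀) 0) + 1, by linarith [le_max_right A (max (2 * s₀) 0)],
    fun α hα => ?_⟩
  have hs₀ : s₀ < α / 2 := by
    linarith [le_max_left (2 * s₀) 0, le_max_right A (max (2 * s₀) 0)]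
  have hlim : Tendsto (fun s => xt α s - xb s) atBot (𝓝 0) := by
    simpa using ((hxtlim1 α).sub hxblim).congr fun s => by ring
  have hlim' : Tendsto (fun s => deriv (xt α) s - deriv xb s) atBot (𝓝 0) := by
    simpa using ((tendsto_of_tendsto_exp_neg_mul (hxtlim2 α)).sub hxblim').congr fun s => by ring
  have hw := hA α (by linarith [le_max_left A (max (2 * s₀) 0)]) _ _ _
    (.of_sub_of_ode hd hs₀ hxb2 (hxt2 α) hxbode (hxtode α) hlim hlim' hM hK)
  refine ⟨fun s hs => ?_, fun s hs => ?_⟩ <;> rw [abs_sub_comm]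
  · exact (norm_fst_le _).trans_lt (hw s hs)
  · exact (norm_snd_le _).trans_lt (hw s hs)
end
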